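/- arXiv:math/0509293 — 6 statements merged into one kernel-verified Lean document; each statement's English description precedes it below -/
import Mathlib

section
/- The reduced shuffle diagonal Δ̄ : T̄(V) → T̄(V)⊗T̄(V) is a derivation of the Lie algebra associated to T̄(V) (with the commutator bracket of concatenation), with values in the Lie module T̄(V)⊗T̄(V) given by x·ξ := Δ(x)·ξ − ξ·(1⊗x + x⊗1). In particular, Δ̄([x,y]) = x*Δ̄(y) + Δ̄(x)*y − y*Δ̄(x) − Δ̄(y)*x for all x,y ∈ T̄(V). -/
open scoped TensorProduct

/-- The shuffle diagonal on the tensor algebra: the unique algebra homomorphism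
`T(V) → T(V) ⊗ T(V)` (concatenation products) sending `v ↦ v⊗1 + 1⊗v`. -/
noncomputable def shuffleDiag (k V : Type) [Field k] [AddCommGroup V] [Module k V] :
    TensorAlgebra k V →ₐ[k] TensorAlgebra k V ⊗[k] TensorAlgebra k V :=
  TensorAlgebra.lift k
    (((Algebra.TensorProduct.includeLeft :
        TensorAlgebra k V →ₐ[k] TensorAlgebra k V ⊗[k] TensorAlgebra k V).toLinearMap
      + (Algebra.TensorProduct.includeRight :
        TensorAlgebra k V →ₐ[k] TensorAlgebra k V ⊗[k] TensorAlgebra k V).toLinearMap).comp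
      (TensorAlgebra.ι k))

/-- The reduced shuffle diagonal `Δ̄(x) = Δ(x) − 1⊗x − x⊗1`. -/
noncomputable def redDiag (k V : Type) [Field k] [AddCommGroup V] [Module k V]
    (x : TensorAlgebra k V) : TensorAlgebra k V ⊗[k] TensorAlgebra k V :=
  shuffleDiag k V x - 1 ⊗ₜ[k] x - x ⊗ₜ[k] 1

/-- The augmentation ideal `T̄(V)` of the tensor algebra, as a `k`-submodule. -/
noncomputable def augSub (k V : Type) [Field k] [AddCommGroup V] [Module k V] :
    Submodule k (TensorAlgebra k V) :=
  LinearMap.ker (TensorAlgebra.algebraMapInv : TensorAlgebra k V →ₐ[k] k).toLinearMap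

/-- The subspace `T̄(V) ⊗ T̄(V)` inside `T(V) ⊗ T(V)`. -/
noncomputable def augSub2 (k V : Type) [Field k] [AddCommGroup V] [Module k V] :
    Submodule k (TensorAlgebra k V ⊗[k] TensorAlgebra k V) :=
  LinearMap.range (TensorProduct.map (augSub k V).subtype (augSub k V).subtype)

/-!
Write `Δ̄ = Δ - P` with `P x = 1 ⊗ x + x ⊗ 1`. The shuffle diagonal `Δ` is multiplicative, and `P`
preserves commutators because the cross terms `x ⊗ y` and `y ⊗ x` of `P x * P y` and `P y * P x`
cancel. The derivation identity for `Δ̄` is then a formal consequence in any ring.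
-/

theorem one_tmul_add_tmul_one_commutator {R A : Type*} [CommRing R] [Ring A] [Algebra R A]
    (a b : A) :
    (1 ⊗ₜ[R] a + a ⊗ₜ[R] 1) * (1 ⊗ₜ[R] b + b ⊗ₜ[R] 1)
        - (1 ⊗ₜ[R] b + b ⊗ₜ[R] 1) * (1 ⊗ₜ[R] a + a ⊗ₜ[R] 1)
      = 1 ⊗ₜ[R] (a * b - b * a) + (a * b - b * a) ⊗ₜ[R] 1 := by
  simp only [mul_add, add_mul, Algebra.TensorProduct.tmul_mul_tmul, one_mul, mul_one,
    TensorProduct.tmul_sub, TensorProduct.sub_tmul]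
  abel

theorem map_commutator_sub_eq {F A B : Type*} [Ring A] [Ring B] [FunLike F A B]
    [RingHomClass F A B] (f : F) (p : A → B) (x y : A)
    (hp : p (x * y - y * x) = p x * p y - p y * p x) :
    f (x * y - y * x) - p (x * y - y * x)
      = f x * (f y - p y) + (f x - p x) * p y - f y * (f x - p x) - (f y - p y) * p x := by
  rw [hp, map_sub, map_mul, map_mul]
  noncomm_ring

theorem redDiag_lie_derivation_general {k V : Type} [Field k]
    [AddCommGroup V] [Module k V]
    (x y : TensorAlgebra k V) :
    redDiag k V (x * y - y * x)
      = shuffleDiag k V x * redDiag k V y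
        + redDiag k V x * (1 ⊗ₜ[k] y + y ⊗ₜ[k] 1)
        - shuffleDiag k V y * redDiag k V x
        - redDiag k V y * (1 ⊗ₜ[k] x + x ⊗ₜ[k] 1) := by
  simp only [redDiag, sub_sub (shuffleDiag k V _)]
  exact map_commutator_sub_eq (shuffleDiag k V) (fun a => 1 ⊗ₜ[k] a + a ⊗ₜ[k] 1) x y
    (one_tmul_add_tmul_one_commutator x y).symm

/-- The reduced shuffle diagonal `Δ̄` is a derivation of the Lie algebra associated
to `T̄(V)` (commutator of concatenation) with values in `T̄(V)⊗T̄(V)`: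
`Δ̄([x,y]) = x*Δ̄(y) + Δ̄(x)*y − y*Δ̄(x) − Δ̄(y)*x`. -/
theorem redDiag_lie_derivation {k V : Type} [Field k] [CharZero k]
    [AddCommGroup V] [Module k V]
    (x y : TensorAlgebra k V) (hx : x ∈ augSub k V) (hy : y ∈ augSub k V) :
    redDiag k V (x * y - y * x)
      = shuffleDiag k V x * redDiag k V y
        + redDiag k V x * (1 ⊗ₜ[k] y + y ⊗ₜ[k] 1)
        - shuffleDiag k V y * redDiag k V x
        - redDiag k V y * (1 ⊗ₜ[k] x + x ⊗ₜ[k] 1) :=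
  redDiag_lie_derivation_general x y
end

section
/- The Lie subalgebra L(V) of T̄(V) (with commutator bracket) generated by V is contained in the kernel of the reduced shuffle diagonal Δ̄ : T̄(V) → T̄(V)⊗T̄(V). -/
open scoped TensorProduct

attribute [local instance] LieRing.ofAssociativeRing

section Primitive

variable {R A : Type} [CommRing R] [Ring A] [Algebra R A]

/-- Closed under commutators because `Δ` is multiplicative: the cross terms `x ⊗ y + y ⊗ x`
of `Δ x * Δ y` and `Δ y * Δ x` cancel. -/
noncomputable def primitiveLieSubalgebra (Δ : A →ₐ[R] A ⊗[R] A) : LieSubalgebra R A where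
  carrier := {x | Δ x = 1 ⊗ₜ[R] x + x ⊗ₜ[R] 1}
  add_mem' := by
    intro a b (ha : Δ a = _) (hb : Δ b = _)
    change Δ (a + b) = _
    rw [map_add, ha, hb, TensorProduct.tmul_add, TensorProduct.add_tmul]
    abel
  zero_mem' := by simp
  smul_mem' := by
    intro c x (hx : Δ x = _)
    change Δ (c • x) = _
    rw [map_smul, hx, smul_add, TensorProduct.smul_tmul', TensorProduct.smul_tmul',
      TensorProduct.smul_tmul]
  lie_mem' := by
    intro x y (hx : Δ x = _) (hy : Δ y = _)
    change Δ ⁅x, y⁆ = _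
    rw [LieRing.of_associative_ring_bracket, map_sub, map_mul, map_mul, hx, hy]
    simp only [add_mul, mul_add, Algebra.TensorProduct.tmul_mul_tmul, one_mul, mul_one,
      TensorProduct.tmul_sub, TensorProduct.sub_tmul]
    abel

theorem mem_primitiveLieSubalgebra {Δ : A →ₐ[R] A ⊗[R] A} {x : A} :
    x ∈ primitiveLieSubalgebra Δ ↔ Δ x = 1 ⊗ₜ[R] x + x ⊗ₜ[R] 1 :=
  Iff.rfl

end Primitive

theorem redDiag_eq_zero_iff {k V : Type} [Field k] [AddCommGroup V] [Module k V]
    (x : TensorAlgebra k V) :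
    redDiag k V x = 0 ↔ x ∈ primitiveLieSubalgebra (shuffleDiag k V) := by
  rw [mem_primitiveLieSubalgebra, redDiag, sub_sub, sub_eq_zero]

theorem ι_mem_primitiveLieSubalgebra_shuffleDiag {k V : Type} [Field k] [AddCommGroup V]
    [Module k V] (v : V) :
    TensorAlgebra.ι k v ∈ primitiveLieSubalgebra (shuffleDiag k V) := by
  simp [mem_primitiveLieSubalgebra, shuffleDiag, add_comm]

theorem lieSpan_subset_ker_redDiag_general {k V : Type} [Field k]
    [AddCommGroup V] [Module k V] :
    ∀ x ∈ LieSubalgebra.lieSpan k (TensorAlgebra k V)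
      (Set.range (TensorAlgebra.ι k : V →ₗ[k] TensorAlgebra k V)),
      redDiag k V x = 0 := by
  intro x hx
  rw [redDiag_eq_zero_iff]
  refine LieSubalgebra.lieSpan_le.mpr ?_ hx
  rintro _ ⟨v, rfl⟩
  exact ι_mem_primitiveLieSubalgebra_shuffleDiag v

/-- The Lie subalgebra `L(V)` of `T̄(V)` (with the commutator bracket
`[x,y] = x⊗y − y⊗x`) generated by `V` is contained in the kernel of the reduced
shuffle diagonal `Δ̄`. -/
theorem lieSpan_subset_ker_redDiag {k V : Type} [Field k] [CharZero k]
    [AddCommGroup V] [Module k V] :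
    ∀ x ∈ LieSubalgebra.lieSpan k (TensorAlgebra k V)
      (Set.range (TensorAlgebra.ι k : V →ₗ[k] TensorAlgebra k V)),
      redDiag k V x = 0 :=
  lieSpan_subset_ker_redDiag_general
end

section
/- The kernel of the reduced shuffle diagonal Δ̄ : T̄(V) → T̄(V)⊗T̄(V) equals the Lie subalgebra L(V) generated by V inside T̄(V) with the commutator bracket (Friedrichs' criterion for Lie elements). -/
open scoped TensorProduct

attribute [local instance] LieRing.ofAssociativeRing

/-!
The Dynkin map `D (v₁ ⋯ vₙ) = ⁅v₁, ⁅v₂, …, ⁅vₙ₋₁, vₙ⁆…⁆⁆` takes values in the Lie span `L(V)`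
and satisfies `D (v x) = ⁅v, D x⁆ + ε(x) v`. Since `Δ` is multiplicative, this recursion shows
that the convolution `μ ∘ (D ⊗ id) ∘ Δ` multiplies tensors of degree `n` by `n`
(Dynkin–Specht–Wever). For a primitive `x` the convolution is just `D x`, because `D 1 = 0`;
hence the degree-`n` component of `x` is `1/n` times that of `D x`, which lies in `L(V)` because
`L(V)` is spanned by homogeneous brackets, while the degree-`0` component is `ε(x) = 0`.
Conversely, the primitive elements form a Lie subalgebra containing `V`.
-/

open DirectSum

section Graded

variable {ι R M : Type*} [DecidableEq ι] [Semiring R] [AddCommMonoid M] [Module R M]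
  (ℳ : ι → Submodule R M) [Decomposition ℳ]

theorem Submodule.isHomogeneous_span {s : Set M} (hs : ∀ x ∈ s, SetLike.IsHomogeneousElem ℳ x) :
    (Submodule.span R s).IsHomogeneous ℳ := by
  intro i x hx
  induction hx using Submodule.span_induction with
  | mem x hx =>
    obtain ⟨j, hj⟩ := hs x hx
    rcases eq_or_ne j i with rfl | hne
    · rw [decompose_of_mem_same ℳ hj]; exact Submodule.subset_span hx
    · rw [decompose_of_mem_ne ℳ hj hne]; exact zero_mem _
  | zero => simp
  | add x y _ _ hx hy => simpa using add_mem hx hy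
  | smul r x _ hx =>
    rw [decompose_smul, DirectSum.smul_apply, SetLike.val_smul]
    exact Submodule.smul_mem _ r hx

theorem DirectSum.decompose_apply_eq_smul_of_forall_mem (f : M →ₗ[R] M) (c : ι → R)
    (hf : ∀ i, ∀ x ∈ ℳ i, f x = c i • x) (x : M) (i : ι) :
    (decompose ℳ (f x) i : M) = c i • (decompose ℳ x i : M) := by
  induction x using Decomposition.inductionOn ℳ with
  | zero => simp
  | @homogeneous j x =>
    rw [hf j x x.2, decompose_smul, DirectSum.smul_apply, SetLike.val_smul]
    rcases eq_or_ne j i with rfl | hne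
    · rw [decompose_of_mem_same ℳ x.2]
    · rw [decompose_of_mem_ne ℳ x.2 hne, smul_zero, smul_zero]
  | add x y hx hy => simp [hx, hy, smul_add]

end Graded

theorem LieSubalgebra.isHomogeneous_lieSpan {ι R A : Type*} [DecidableEq ι] [AddCommMonoid ι]
    [CommRing R] [Ring A] [Algebra R A] (𝒜 : ι → Submodule R A) [GradedRing 𝒜] {s : Set A}
    (hs : ∀ x ∈ s, SetLike.IsHomogeneousElem 𝒜 x) :
    (LieSubalgebra.lieSpan R A s).toSubmodule.IsHomogeneous 𝒜 := by
  set L := LieSubalgebra.lieSpan R A s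
  let H := {x | x ∈ L ∧ SetLike.IsHomogeneousElem 𝒜 x}
  have hbracket : ∀ x ∈ H, ∀ y ∈ H, ⁅x, y⁆ ∈ H := by
    rintro x ⟨hxL, i, hx⟩ y ⟨hyL, j, hy⟩
    refine ⟨L.lie_mem hxL hyL, i + j, ?_⟩
    rw [Ring.lie_def]
    exact sub_mem (SetLike.mul_mem_graded hx hy) (add_comm j i ▸ SetLike.mul_mem_graded hy hx)
  let spanH : LieSubalgebra R A :=
    { Submodule.span R H with
      lie_mem' := fun {x y} hx hy =>
        LinearMap.BilinMap.apply_apply_mem_of_mem_span _ H H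
          (LieModule.toEnd R A A : A →ₗ[R] Module.End R A)
          (fun x hx y hy => Submodule.subset_span (hbracket x hx y hy)) x y hx hy }
  have hL : L.toSubmodule = Submodule.span R H := by
    refine le_antisymm (fun x hx => ?_) (Submodule.span_le.mpr fun x hx => hx.1)
    exact (LieSubalgebra.lieSpan_le.mpr fun x hx => Submodule.subset_span
      ⟨LieSubalgebra.subset_lieSpan hx, hs x hx⟩ : L ≤ spanH) hx
  rw [hL]
  exact Submodule.isHomogeneous_span 𝒜 fun x hx => hx.2

namespace TensorAlgebra

section CommSemiring

variable {R M : Type*} [CommSemiring R] [AddCommMonoid M] [Module R M]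

local notation "𝒯" => fun n : ℕ => LinearMap.range (ι R : M →ₗ[R] TensorAlgebra R M) ^ n

theorem mem_of_one_mem_of_ι_mul_mem (S : Submodule R (TensorAlgebra R M)) (one : 1 ∈ S)
    (ι_mul : ∀ m x, x ∈ S → ι R m * x ∈ S) (x : TensorAlgebra R M) : x ∈ S := by
  suffices ∀ y ∈ S, x * y ∈ S by simpa using this 1 one
  induction x using TensorAlgebra.induction with
  | algebraMap r => simpa [Algebra.algebraMap_eq_smul_one] using fun y hy => S.smul_mem r hy
  | ι m => exact ι_mul m
  | mul a b ha hb => exact fun y hy => mul_assoc a b y ▸ ha _ (hb y hy)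
  | add a b ha hb => exact fun y hy => add_mul a b y ▸ S.add_mem (ha y hy) (hb y hy)

theorem algebraMapInv_eq_zero_of_mem_pow {n : ℕ} (hn : n ≠ 0) {x : TensorAlgebra R M}
    (hx : x ∈ 𝒯 n) : algebraMapInv x = 0 := by
  induction hx using Submodule.pow_induction_on_left' with
  | algebraMap r => exact absurd rfl hn
  | add x y i _ _ hx hy => rw [map_add, hx hn, hy hn, add_zero]
  | mem_mul m hm i x _ _ =>
    obtain ⟨m, rfl⟩ := hm
    simp [algebraMapInv]

theorem decompose_zero_eq_algebraMap_algebraMapInv (x : TensorAlgebra R M) :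
    (decompose 𝒯 x 0 : TensorAlgebra R M) = algebraMap R _ (algebraMapInv x) := by
  induction x using Decomposition.inductionOn 𝒯 with
  | zero => simp
  | @homogeneous i x =>
    obtain ⟨x, hx⟩ := x
    rcases eq_or_ne i 0 with rfl | hi
    · obtain ⟨r, rfl⟩ := Submodule.mem_one.mp (pow_zero (𝒯 1) ▸ hx :)
      rw [decompose_of_mem_same _ hx, algebraMap_leftInverse]
    · rw [decompose_of_mem_ne _ hx hi, algebraMapInv_eq_zero_of_mem_pow hi hx, map_zero]
  | add x y hx hy => simp [hx, hy]

end CommSemiring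

section CommRing

variable {R M : Type*} [CommRing R] [AddCommMonoid M] [Module R M]

local notation "T" => TensorAlgebra R M

def dynkinStep : T →ₗ[R] Module.End R (R × T) :=
  LinearMap.mk₂ R (fun a p => (0, p.1 • a + ⁅a, p.2⁆))
    (fun a b p => by ext <;> simp [smul_add, add_add_add_comm])
    (fun c a p => by ext <;> simp [smul_comm c, smul_add])
    (fun a p q => by ext <;> simp [add_smul, add_add_add_comm])
    (fun c a p => by ext <;> simp [mul_smul, smul_add])

/-- `dynkinPair x = (algebraMapInv x, dynkin x)`: the action of `x` on `(1, 0)` through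
`ι m ↦ dynkinStep (ι m)` turns the recursion `D (m x) = ⁅m, D x⁆ + ε(x) m` into a definition. -/
def dynkinPair : T →ₗ[R] R × T :=
  LinearMap.applyₗ ((1, 0) : R × T) ∘ₗ (lift R (dynkinStep ∘ₗ ι R)).toLinearMap

theorem dynkinPair_one : dynkinPair (1 : T) = (1, 0) := by
  simp [dynkinPair]

theorem dynkinPair_ι_mul (m : M) (x : T) :
    dynkinPair (ι R m * x) = (0, (dynkinPair x).1 • ι R m + ⁅ι R m, (dynkinPair x).2⁆) := by
  simp [dynkinPair, dynkinStep]

theorem fst_dynkinPair (x : T) : (dynkinPair x).1 = algebraMapInv x := by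
  suffices x ∈ LinearMap.ker (LinearMap.fst R R T ∘ₗ dynkinPair - algebraMapInv.toLinearMap) by
    simpa [sub_eq_zero] using this
  refine mem_of_one_mem_of_ι_mul_mem _ ?_ ?_ x
  · simp [dynkinPair_one]
  · intro m y _
    simp [dynkinPair_ι_mul, algebraMapInv]

def dynkin : T →ₗ[R] T := LinearMap.snd R R T ∘ₗ dynkinPair

theorem dynkin_one : dynkin (1 : T) = 0 := by
  simp [dynkin, dynkinPair_one]

theorem dynkin_ι_mul (m : M) (x : T) :
    dynkin (ι R m * x) = ⁅ι R m, dynkin x⁆ + algebraMapInv x • ι R m := by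
  simp [dynkin, dynkinPair_ι_mul, fst_dynkinPair, add_comm]

theorem dynkin_mem_lieSpan (x : T) :
    dynkin x ∈ LieSubalgebra.lieSpan R T (Set.range (ι R)) := by
  set L := LieSubalgebra.lieSpan R T (Set.range (ι R))
  have hι (m : M) : ι R m ∈ L := LieSubalgebra.subset_lieSpan ⟨m, rfl⟩
  refine mem_of_one_mem_of_ι_mul_mem (L.toSubmodule.comap dynkin) ?_ ?_ x
  · simp [dynkin_one]
  · intro m y hy
    simp only [Submodule.mem_comap, dynkin_ι_mul] at hy ⊢
    exact add_mem (L.lie_mem (hι m) hy) (L.toSubmodule.smul_mem _ (hι m))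

end CommRing

end TensorAlgebra

open TensorAlgebra

section Shuffle

variable {k V : Type} [Field k] [AddCommGroup V] [Module k V]

local notation "T" => TensorAlgebra k V

local notation "𝒯" => fun n : ℕ => LinearMap.range (ι k : V →ₗ[k] TensorAlgebra k V) ^ n

theorem shuffleDiag_ι (v : V) : shuffleDiag k V (ι k v) = ι k v ⊗ₜ[k] 1 + 1 ⊗ₜ[k] ι k v := by
  simp [shuffleDiag]

noncomputable def counitTensorId : T ⊗[k] T →ₐ[k] T :=
  (Algebra.TensorProduct.lid k T).toAlgHom.comp
    (Algebra.TensorProduct.map algebraMapInv (AlgHom.id k T))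

theorem counitTensorId_tmul (a b : T) : counitTensorId (a ⊗ₜ[k] b) = algebraMapInv a • b := by
  simp [counitTensorId]

theorem counitTensorId_shuffleDiag (x : T) : counitTensorId (shuffleDiag k V x) = x := by
  suffices counitTensorId.comp (shuffleDiag k V) = AlgHom.id k T from DFunLike.congr_fun this x
  ext v
  simp [shuffleDiag_ι, counitTensorId_tmul, algebraMapInv]

noncomputable def dynkinTensorId : T ⊗[k] T →ₗ[k] T :=
  LinearMap.mul' k T ∘ₗ TensorProduct.map dynkin LinearMap.id

theorem dynkinTensorId_tmul (a b : T) : dynkinTensorId (a ⊗ₜ[k] b) = dynkin a * b := by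
  simp [dynkinTensorId]

theorem dynkinTensorId_shuffleDiag_ι_mul (v : V) (z : T ⊗[k] T) :
    dynkinTensorId (shuffleDiag k V (ι k v) * z) =
      ι k v * dynkinTensorId z + ι k v * counitTensorId z := by
  induction z with
  | zero => simp
  | tmul a b =>
    simp only [shuffleDiag_ι, add_mul, Algebra.TensorProduct.tmul_mul_tmul, one_mul, map_add,
      dynkinTensorId_tmul, counitTensorId_tmul, dynkin_ι_mul, Ring.lie_def]
    simp only [sub_mul, smul_mul_assoc, mul_assoc, mul_smul_comm]
    abel
  | add z w hz hw => simp only [mul_add, map_add, hz, hw]; abel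

/-- The Dynkin–Specht–Wever identity in convolution form: `dynkin ⋆ id` is the degree operator. -/
theorem dynkinTensorId_shuffleDiag_of_mem_pow {n : ℕ} {x : T} (hx : x ∈ 𝒯 n) :
    dynkinTensorId (shuffleDiag k V x) = (n : k) • x := by
  induction hx using Submodule.pow_induction_on_left' with
  | algebraMap r =>
    simp [Algebra.algebraMap_eq_smul_one, Algebra.TensorProduct.one_def, dynkinTensorId_tmul,
      dynkin_one]
  | add x y i _ _ hx hy => rw [map_add, map_add, hx, hy, smul_add]
  | mem_mul m hm i x _ ih =>
    obtain ⟨v, rfl⟩ := hm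
    rw [map_mul, dynkinTensorId_shuffleDiag_ι_mul, ih, counitTensorId_shuffleDiag]
    simp [add_smul]

def primitives : LieSubalgebra k T where
  carrier := {x | shuffleDiag k V x = 1 ⊗ₜ[k] x + x ⊗ₜ[k] 1}
  zero_mem' := by simp
  add_mem' {x y} (hx : _ = _) (hy : _ = _) := by
    change _ = _
    rw [map_add, hx, hy, TensorProduct.tmul_add, TensorProduct.add_tmul]
    abel
  smul_mem' c x (hx : _ = _) := by
    change _ = _
    rw [map_smul, hx, smul_add, TensorProduct.tmul_smul, TensorProduct.smul_tmul' c x]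
  lie_mem' {x y} (hx : _ = _) (hy : _ = _) := by
    change _ = _
    simp only [Ring.lie_def, map_sub, map_mul, hx, hy, add_mul, mul_add,
      Algebra.TensorProduct.tmul_mul_tmul, one_mul, mul_one, TensorProduct.tmul_sub,
      TensorProduct.sub_tmul]
    abel

theorem redDiag_eq_zero_iff_s7 {x : T} : redDiag k V x = 0 ↔ x ∈ primitives := by
  rw [redDiag, sub_sub, sub_eq_zero]
  rfl

theorem algebraMapInv_eq_zero_of_mem_primitives {x : T} (hx : x ∈ primitives) :
    algebraMapInv x = 0 := by
  have h := counitTensorId_shuffleDiag x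
  rw [show shuffleDiag k V x = _ from hx, map_add, counitTensorId_tmul, counitTensorId_tmul,
    map_one, one_smul, add_eq_left, Algebra.smul_def, mul_one] at h
  exact (algebraMap_eq_zero_iff V _).mp h

theorem lieSpan_le_primitives :
    LieSubalgebra.lieSpan k T (Set.range (ι k)) ≤ primitives := by
  rw [LieSubalgebra.lieSpan_le]
  rintro _ ⟨v, rfl⟩
  exact (shuffleDiag_ι v).trans (add_comm _ _)

theorem dynkinTensorId_shuffleDiag_of_mem_primitives {x : T} (hx : x ∈ primitives) :
    dynkinTensorId (shuffleDiag k V x) = dynkin x := by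
  rw [show shuffleDiag k V x = _ from hx]
  simp [dynkinTensorId_tmul, dynkin_one]

theorem decompose_dynkin_of_mem_primitives {x : T} (hx : x ∈ primitives) (n : ℕ) :
    (decompose 𝒯 (dynkin x) n : T) = (n : k) • (decompose 𝒯 x n : T) := by
  rw [← dynkinTensorId_shuffleDiag_of_mem_primitives hx]
  exact decompose_apply_eq_smul_of_forall_mem 𝒯
    (dynkinTensorId ∘ₗ (shuffleDiag k V).toLinearMap) (fun n : ℕ => (n : k))
    (fun _ _ hy => dynkinTensorId_shuffleDiag_of_mem_pow hy) x n

theorem mem_lieSpan_of_mem_primitives [CharZero k] {x : T} (hx : x ∈ primitives) :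
    x ∈ LieSubalgebra.lieSpan k T (Set.range (ι k)) := by
  set L := LieSubalgebra.lieSpan k T (Set.range (ι k))
  have hL : L.toSubmodule.IsHomogeneous 𝒯 :=
    LieSubalgebra.isHomogeneous_lieSpan _ fun _ ⟨v, hv⟩ => ⟨1, hv ▸ by simp⟩
  rw [← LieSubalgebra.mem_toSubmodule, hL.mem_iff]
  intro n
  rcases eq_or_ne n 0 with rfl | hn
  · rw [decompose_zero_eq_algebraMap_algebraMapInv, algebraMapInv_eq_zero_of_mem_primitives hx,
      map_zero]
    exact zero_mem _
  · have hcomp := hL n (dynkin_mem_lieSpan x)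
    rw [decompose_dynkin_of_mem_primitives hx] at hcomp
    simpa [hn] using L.toSubmodule.smul_mem (n : k)⁻¹ hcomp

end Shuffle

/-- Friedrichs' criterion: the kernel of the reduced shuffle diagonal
`Δ̄ : T̄(V) → T̄(V)⊗T̄(V)` equals the Lie subalgebra `L(V)` generated by `V`
inside `T̄(V)` with the commutator bracket. -/
theorem ker_redDiag_eq_lieSpan {k V : Type} [Field k] [CharZero k]
    [AddCommGroup V] [Module k V] :
    ∀ x : TensorAlgebra k V,
      (x ∈ augSub k V ∧ redDiag k V x = 0) ↔
        x ∈ LieSubalgebra.lieSpan k (TensorAlgebra k V)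
          (Set.range (TensorAlgebra.ι k : V →ₗ[k] TensorAlgebra k V)) := by
  intro x
  rw [redDiag_eq_zero_iff_s7]
  constructor
  · rintro ⟨-, hx⟩
    exact mem_lieSpan_of_mem_primitives hx
  · intro hx
    have hprim := lieSpan_le_primitives hx
    exact ⟨algebraMapInv_eq_zero_of_mem_primitives hprim, hprim⟩
end

section
/- On the quotient rpL*(V) = pL(V,∘)/(∘⋆∘) of the free graded pre-Lie algebra by the ideal generated by ∘⋆∘, there exists a unique degree +1 map d with d(v)=0 for v∈V, d(∘)=0, and d(a⋆b) = d(a)⋆b + (−1)^{|a|}a⋆d(b) + Φ(∘,a,b); moreover d² = 0. -/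
/-- The universal property of the free graded pre-Lie algebra `pL*(V,∘)` on a vector
space `V` placed in degree `0` and a single generator `∘` in degree `+1`, over a
field of characteristic zero.  The grading is by submodules `𝒜 i`; graded pre-Lie
means `Φ(x,y,z) = (−1)^{|y||z|} Φ(x,z,y)` for the associator `Φ`. -/
structure IsFreeGradedPreLie (k : Type) [Field k]
    (V : Type) [AddCommGroup V] [Module k V]
    (A : Type) [AddCommGroup A] [Module k A]
    (𝒜 : ℕ → Submodule k A) (mul : A →ₗ[k] A →ₗ[k] A)
    (ι : V →ₗ[k] A) (circ : A) : Prop where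
  internal : DirectSum.IsInternal 𝒜
  mul_mem : ∀ (i j : ℕ) (x y : A), x ∈ 𝒜 i → y ∈ 𝒜 j → mul x y ∈ 𝒜 (i + j)
  preLie : ∀ (j l : ℕ) (x y z : A), y ∈ 𝒜 j → z ∈ 𝒜 l →
    mul (mul x y) z - mul x (mul y z)
      = ((-1 : k) ^ (j * l)) • (mul (mul x z) y - mul x (mul z y))
  ι_mem : ∀ v : V, ι v ∈ 𝒜 0
  circ_mem : circ ∈ 𝒜 1
  lift : ∀ (B : Type) [AddCommGroup B] [Module k B]
    (ℬ : ℕ → Submodule k B) (mulB : B →ₗ[k] B →ₗ[k] B),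
    DirectSum.IsInternal ℬ →
    (∀ (i j : ℕ) (x y : B), x ∈ ℬ i → y ∈ ℬ j → mulB x y ∈ ℬ (i + j)) →
    (∀ (j l : ℕ) (x y z : B), y ∈ ℬ j → z ∈ ℬ l →
      mulB (mulB x y) z - mulB x (mulB y z)
        = ((-1 : k) ^ (j * l)) • (mulB (mulB x z) y - mulB x (mulB z y))) →
    ∀ (f : V →ₗ[k] B), (∀ v, f v ∈ ℬ 0) → ∀ b : B, b ∈ ℬ 1 →
      ∃! g : A →ₗ[k] B,
        (∀ (i : ℕ) (x : A), x ∈ 𝒜 i → g x ∈ ℬ i) ∧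
        (∀ x y : A, g (mul x y) = mulB (g x) (g y)) ∧
        (∀ v : V, g (ι v) = f v) ∧ g circ = b

/-!
A map `d` as in the theorem is the same as a multiplicative map `x ↦ (x, d x)` from
`Q = rpL*(V)` to the square-zero extension `Q × Q` with product
`(x, u) ⋆ (y, v) = (x ⋆ y, u ⋆ y + (-1)^|x| x ⋆ v + Φ(∘, x, y))`, which is graded pre-Lie on the
sum of the pieces `Qᵢ × Qᵢ₊₁`. Freeness of `pL(V,∘)` provides such a map on `pL(V,∘)`; it kills
`∘ ⋆ ∘` because `∘ ⋆ ∘ = 0` in `Q`, so it descends to `Q` and yields `d`.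

The universal property, applied to the graded sub-pre-Lie algebra on which a linear map vanishes,
shows that `pL(V,∘)` is generated by `V` and `∘`. Uniqueness and `d² = 0` follow: the difference
of two such maps and, since `d ∘ = 0` and `∘ ⋆ ∘ = 0`, the square `d²` are graded derivations
vanishing on the generators.
-/

open DirectSum

namespace DirectSum.IsInternal

variable {R M N : Type} [CommRing R] [AddCommGroup M] [Module R M] [AddCommGroup N] [Module R N]

theorem linearMap_ext {ι : Type} [DecidableEq ι] {ℳ : ι → Submodule R M} (hℳ : IsInternal ℳ)
    {f g : M →ₗ[R] N} (hfg : ∀ i, ∀ x ∈ ℳ i, f x = g x) : f = g :=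
  LinearMap.eqLocus_eq_top.1 <| eq_top_iff.2 <|
    hℳ.submodule_iSup_eq_top ▸ iSup_le fun i x hx => hfg i x hx

variable {ℳ : ℕ → Submodule R M}

noncomputable def parity (hℳ : IsInternal ℳ) : M →ₗ[R] M :=
  toModule R ℕ M (fun i => (-1 : R) ^ i • (ℳ i).subtype) ∘ₗ
    (LinearEquiv.ofBijective (coeLinearMap ℳ) hℳ).symm.toLinearMap

theorem parity_of_mem (hℳ : IsInternal ℳ) {i : ℕ} {x : M} (hx : x ∈ ℳ i) :
    hℳ.parity x = (-1 : R) ^ i • x := by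
  have hsymm : (LinearEquiv.ofBijective (coeLinearMap ℳ) hℳ).symm x = lof R ℕ _ i ⟨x, hx⟩ :=
    (LinearEquiv.symm_apply_eq _).2 (coeLinearMap_of ℳ i ⟨x, hx⟩).symm
  simp [parity, hsymm]

theorem parity_mul (hℳ : IsInternal ℳ) {m : M →ₗ[R] M →ₗ[R] M}
    (hm : ∀ i j x y, x ∈ ℳ i → y ∈ ℳ j → m x y ∈ ℳ (i + j)) (x y : M) :
    hℳ.parity (m x y) = m (hℳ.parity x) (hℳ.parity y) := by
  suffices m.compr₂ hℳ.parity = m.compl₁₂ hℳ.parity hℳ.parity from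
    LinearMap.congr_fun₂ this x y
  refine hℳ.linearMap_ext fun i x hx => hℳ.linearMap_ext fun j y hy => ?_
  simp [parity_of_mem hℳ hx, parity_of_mem hℳ hy, parity_of_mem hℳ (hm i j x y hx hy),
    smul_smul, pow_add, mul_comm]

end DirectSum.IsInternal

section Independence

variable {R M N : Type} [Ring R] [AddCommGroup M] [Module R M] [AddCommGroup N] [Module R N]

theorem iSupIndep.prod {ι : Type} {S : ι → Submodule R M} {T : ι → Submodule R N}
    (hS : iSupIndep S) (hT : iSupIndep T) : iSupIndep fun i => (S i).prod (T i) := fun i => by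
  refine Disjoint.mono_right (iSup₂_le fun j hj =>
    Submodule.prod_mono (le_iSup₂ (f := fun j (_ : j ≠ i) => S j) j hj)
      (le_iSup₂ (f := fun j (_ : j ≠ i) => T j) j hj)) ?_
  rw [disjoint_iff, Submodule.prod_inf_prod, (hS i).eq_bot, (hT i).eq_bot, Submodule.prod_bot]

theorem DirectSum.isInternal_comap_subtype_iSup {ι : Type} [DecidableEq ι]
    {S : ι → Submodule R M} (hS : iSupIndep S) :
    IsInternal fun i => (S i).comap (⨆ j, S j).subtype := by
  have hmap (i : ι) : ((S i).comap (⨆ j, S j).subtype).map (⨆ j, S j).subtype = S i := by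
    rw [Submodule.map_comap_subtype, inf_of_le_right (le_iSup S i)]
  refine isInternal_submodule_of_iSupIndep_of_iSup_eq_top (fun i => ?_) ?_
  · refine Submodule.disjoint_def.2 fun x hx hx' => Subtype.ext <|
      Submodule.disjoint_def.1 (hS i) x hx ?_
    simpa only [Submodule.map_iSup, hmap, Submodule.subtype_apply] using
      Submodule.mem_map_of_mem (f := (⨆ j, S j).subtype) hx'
  · apply Submodule.map_injective_of_injective (⨆ j, S j).injective_subtype
    simp only [Submodule.map_iSup, hmap, Submodule.map_top, Submodule.range_subtype]

theorem DirectSum.IsInternal.map_mkQ {ι : Type} [DecidableEq ι] {ℳ : ι → Submodule R M}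
    (hℳ : IsInternal ℳ) {I : Submodule R M} (hI : I ≤ ⨆ i, I ⊓ ℳ i) : IsInternal fun i => (ℳ i).map I.mkQ := by
  refine isInternal_submodule_of_iSupIndep_of_iSup_eq_top (fun i => ?_) ?_
  · rw [Submodule.disjoint_def]
    rintro _ ⟨x, hx, rfl⟩ hx'
    simp_rw [← Submodule.map_iSup] at hx'
    obtain ⟨y, hy, hyx⟩ := hx'
    have hsplit : I ≤ I ⊓ ℳ i ⊔ ⨆ (j) (_ : j ≠ i), ℳ j := hI.trans <| iSup_le fun j => by
      by_cases hj : j = i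
      · exact hj ▸ le_sup_left
      · exact inf_le_right.trans
          ((le_iSup₂ (f := fun j (_ : j ≠ i) => ℳ j) j hj).trans le_sup_right)
    -- split `y - x ∈ I` as `z + w` with `z ∈ I ⊓ ℳ i`; then `x + z ∈ ℳ i ⊓ ⨆ j ≠ i, ℳ j = ⊥`
    obtain ⟨z, hz, w, hw, hzw⟩ := Submodule.mem_sup.1 (hsplit ((Submodule.Quotient.eq I).1 hyx))
    have hxz : x + z = y - w := by rw [eq_sub_iff_add_eq, add_assoc, hzw]; abel
    have hxz0 : x + z = 0 := Submodule.disjoint_def.1 (hℳ.submodule_iSupIndep i) _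
      (add_mem hx hz.2) (hxz ▸ sub_mem hy hw)
    rw [eq_neg_of_add_eq_zero_left hxz0]
    simpa using hz.1
  · rw [← Submodule.map_iSup, hℳ.submodule_iSup_eq_top, Submodule.map_top, Submodule.range_mkQ]

end Independence

section PreLie

variable {R M : Type} [CommRing R] [AddCommGroup M] [Module R M]

def assoc (m : M →ₗ[R] M →ₗ[R] M) (x y z : M) : M := m (m x y) z - m x (m y z)

structure IsGradedPreLie (ℳ : ℕ → Submodule R M) (m : M →ₗ[R] M →ₗ[R] M) : Prop where
  internal : DirectSum.IsInternal ℳ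
  mul_mem : ∀ i j x y, x ∈ ℳ i → y ∈ ℳ j → m x y ∈ ℳ (i + j)
  assoc_swap : ∀ j l x y z, y ∈ ℳ j → z ∈ ℳ l →
    assoc m x y z = (-1 : R) ^ (j * l) • assoc m x z y

def restrictMul (m : M →ₗ[R] M →ₗ[R] M) (P : Submodule R M)
    (hP : ∀ x ∈ P, ∀ y ∈ P, m x y ∈ P) : P →ₗ[R] P →ₗ[R] P :=
  LinearMap.mk₂ R (fun x y => ⟨m x y, hP _ x.2 _ y.2⟩)
    (fun _ _ _ => Subtype.ext (by simp)) (fun _ _ _ => Subtype.ext (by simp))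
    (fun _ _ _ => Subtype.ext (by simp)) (fun _ _ _ => Subtype.ext (by simp))

@[simp]
theorem coe_restrictMul (m : M →ₗ[R] M →ₗ[R] M) (P : Submodule R M)
    (hP : ∀ x ∈ P, ∀ y ∈ P, m x y ∈ P) (x y : P) :
    (restrictMul m P hP x y : M) = m x y := rfl

variable {m : M →ₗ[R] M →ₗ[R] M}

theorem mul_mem_iSup {S T U : ℕ → Submodule R M}
    (hST : ∀ i j x y, x ∈ S i → y ∈ T j → m x y ∈ U (i + j)) :
    ∀ x ∈ ⨆ i, S i, ∀ y ∈ ⨆ j, T j, m x y ∈ ⨆ n, U n := by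
  refine Submodule.map₂_le.1 ?_
  simp only [Submodule.map₂_iSup_left, Submodule.map₂_iSup_right]
  exact iSup₂_le fun j i => Submodule.map₂_le.2 fun x hx y hy =>
    Submodule.mem_iSup_of_mem (i + j) (hST i j x y hx hy)

theorem isGradedPreLie_iSup {S : ℕ → Submodule R M} (hind : iSupIndep S)
    (hS : ∀ i j x y, x ∈ S i → y ∈ S j → m x y ∈ S (i + j))
    (hassoc : ∀ j l x y z, y ∈ S j → z ∈ S l →
      assoc m x y z = (-1 : R) ^ (j * l) • assoc m x z y) :
    IsGradedPreLie (fun i => (S i).comap (⨆ j, S j).subtype)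
      (restrictMul m (⨆ i, S i) (mul_mem_iSup hS)) where
  internal := DirectSum.isInternal_comap_subtype_iSup hind
  mul_mem i j x y hx hy := hS i j x y hx hy
  assoc_swap j l x y z hy hz := Subtype.ext (by simpa [assoc] using hassoc j l x y z hy hz)

theorem IsGradedPreLie.quotient {ℳ : ℕ → Submodule R M} (hℳ : IsGradedPreLie ℳ m)
    {I : Submodule R M} (hI : I ≤ ⨆ i, I ⊓ ℳ i) (mulQ : (M ⧸ I) →ₗ[R] (M ⧸ I) →ₗ[R] (M ⧸ I))
    (hmulQ : ∀ x y, mulQ (I.mkQ x) (I.mkQ y) = I.mkQ (m x y)) :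
    IsGradedPreLie (fun i => (ℳ i).map I.mkQ) mulQ where
  internal := hℳ.internal.map_mkQ hI
  mul_mem := by
    rintro i j _ _ ⟨x, hx, rfl⟩ ⟨y, hy, rfl⟩
    exact hmulQ x y ▸ ⟨_, hℳ.mul_mem i j x y hx hy, rfl⟩
  assoc_swap := by
    rintro j l a _ _ ⟨y, hy, rfl⟩ ⟨z, hz, rfl⟩
    obtain ⟨x, rfl⟩ := I.mkQ_surjective a
    simp only [assoc, hmulQ, ← map_sub, ← map_smul]
    exact congrArg I.mkQ (hℳ.assoc_swap j l x y z hy hz)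

end PreLie

section SqZero

variable {R M : Type} [CommRing R] [AddCommGroup M] [Module R M]
  (m : M →ₗ[R] M →ₗ[R] M) (E : M →ₗ[R] M) (c : M)

def sqZeroMul : (M × M) →ₗ[R] (M × M) →ₗ[R] (M × M) :=
  LinearMap.mk₂ R (fun X Y => (m X.1 Y.1, m X.2 Y.1 + m (E X.1) Y.2 + assoc m c X.1 Y.1))
    (fun _ _ _ => Prod.ext (by simp) (by simp only [assoc]; simp; abel))
    (fun _ _ _ => Prod.ext (by simp) (by simp only [assoc]; simp [smul_sub]))
    (fun _ _ _ => Prod.ext (by simp) (by simp only [assoc]; simp; abel))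
    (fun _ _ _ => Prod.ext (by simp) (by simp only [assoc]; simp [smul_sub]))

theorem sqZeroMul_apply (X Y : M × M) : sqZeroMul m E c X Y =
    (m X.1 Y.1, m X.2 Y.1 + m (E X.1) Y.2 + assoc m c X.1 Y.1) := rfl

variable {m E}

theorem assoc_sqZeroMul (hE : ∀ x y, E (m x y) = m (E x) (E y)) (X Y Z : M × M) :
    assoc (sqZeroMul m E c) X Y Z = (assoc m X.1 Y.1 Z.1,
      assoc m X.2 Y.1 Z.1 + assoc m (E X.1) Y.2 Z.1 + assoc m (E X.1) (E Y.1) Z.2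
        + assoc m (m c X.1) Y.1 Z.1 - m c (assoc m X.1 Y.1 Z.1)
        - m (E X.1) (assoc m c Y.1 Z.1)) := by
  refine Prod.ext rfl ?_
  simp only [assoc, sqZeroMul_apply, hE, map_add, map_sub, LinearMap.add_apply,
    LinearMap.sub_apply, Prod.snd_sub]
  abel

end SqZero

section SqZeroGraded

variable {R M : Type} [CommRing R] [AddCommGroup M] [Module R M]
  {m : M →ₗ[R] M →ₗ[R] M} {E : M →ₗ[R] M} {c : M} {𝒬 : ℕ → Submodule R M}

def sqZeroGrading (𝒬 : ℕ → Submodule R M) (i : ℕ) : Submodule R (M × M) :=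
  (𝒬 i).prod (𝒬 (i + 1))

theorem sqZeroMul_mem (hmul : ∀ i j x y, x ∈ 𝒬 i → y ∈ 𝒬 j → m x y ∈ 𝒬 (i + j))
    (hE : ∀ i, ∀ x ∈ 𝒬 i, E x = (-1 : R) ^ i • x) (hc : c ∈ 𝒬 1)
    {i j : ℕ} {X Y : M × M} (hX : X ∈ sqZeroGrading 𝒬 i) (hY : Y ∈ sqZeroGrading 𝒬 j) :
    sqZeroMul m E c X Y ∈ sqZeroGrading 𝒬 (i + j) := by
  obtain ⟨hx, hu⟩ := hX
  obtain ⟨hy, hv⟩ := hY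
  have hcast {n n' : ℕ} {z : M} (h : n = n') (hz : z ∈ 𝒬 n) : z ∈ 𝒬 n' := h ▸ hz
  have hEx : E X.1 ∈ 𝒬 i := hE i _ hx ▸ Submodule.smul_mem _ _ hx
  refine ⟨hmul i j _ _ hx hy, add_mem (add_mem ?_ (hmul i (j + 1) _ _ hEx hv))
    (sub_mem ?_ ?_)⟩
  · exact hcast (by omega) (hmul (i + 1) j _ _ hu hy)
  · exact hcast (by omega) (hmul _ j _ _ (hmul 1 i _ _ hc hx) hy)
  · exact hcast (by omega) (hmul 1 _ _ _ hc (hmul i j _ _ hx hy))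

theorem sqZeroMul_assoc_swap
    (hassoc : ∀ j l x y z, y ∈ 𝒬 j → z ∈ 𝒬 l → assoc m x y z = (-1 : R) ^ (j * l) • assoc m x z y)
    (hE : ∀ i, ∀ x ∈ 𝒬 i, E x = (-1 : R) ^ i • x) (hE_mul : ∀ x y, E (m x y) = m (E x) (E y))
    {j l : ℕ} (X : M × M) {Y Z : M × M} (hY : Y ∈ sqZeroGrading 𝒬 j)
    (hZ : Z ∈ sqZeroGrading 𝒬 l) :
    assoc (sqZeroMul m E c) X Y Z = (-1 : R) ^ (j * l) • assoc (sqZeroMul m E c) X Z Y := by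
  obtain ⟨hy, hv⟩ := hY
  obtain ⟨hz, hw⟩ := hZ
  rw [assoc_sqZeroMul c hE_mul, assoc_sqZeroMul c hE_mul]
  refine Prod.ext (hassoc j l _ _ _ hy hz) ?_
  -- terms 1, 4, 5, 6 of `assoc_sqZeroMul` are graded-symmetric in `Y, Z` on their own,
  -- terms 2 and 3 are exchanged
  have h1 := hassoc j l X.2 _ _ hy hz
  have h2 := hassoc (j + 1) l (E X.1) _ _ hv hz
  have h3 := hassoc j (l + 1) (E X.1) _ _ hy hw
  have h4 := hassoc j l (m c X.1) _ _ hy hz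
  have h5 := congrArg (m c) (hassoc j l X.1 _ _ hy hz)
  have h6 := congrArg (m (E X.1)) (hassoc j l c _ _ hy hz)
  have hsq : (-1 : R) ^ j * (-1 : R) ^ j = 1 := by rw [← mul_pow, neg_mul_neg, one_mul, one_pow]
  simp only [Prod.smul_snd, hE j _ hy, hE l _ hz, assoc, map_smul, map_sub, LinearMap.smul_apply,
    smul_sub] at h1 h2 h3 h4 h5 h6 ⊢
  -- `module` cannot use `((-1) ^ j) ^ 2 = 1` by itself, hence the `hsq` term
  linear_combination (norm := module) h1 + h2 + (-1 : R) ^ j • h3 + h4 - h5 - h6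
    + ((-1 : R) ^ (j * l) * hsq) • (m (m (E X.1) Z.2) Y.1 - m (E X.1) (m Z.2 Y.1))

theorem iSupIndep_sqZeroGrading (h𝒬 : iSupIndep 𝒬) : iSupIndep (sqZeroGrading 𝒬) :=
  h𝒬.prod (h𝒬.comp (add_left_injective 1))

end SqZeroGraded

namespace IsFreeGradedPreLie

variable {k V A B : Type} [Field k] [AddCommGroup V] [Module k V] [AddCommGroup A] [Module k A]
  [AddCommGroup B] [Module k B] {𝒜 : ℕ → Submodule k A} {mul : A →ₗ[k] A →ₗ[k] A}
  {ι : V →ₗ[k] A} {circ : A}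

theorem isGradedPreLie (h : IsFreeGradedPreLie k V A 𝒜 mul ι circ) : IsGradedPreLie 𝒜 mul :=
  ⟨h.internal, h.mul_mem, h.preLie⟩

theorem hom_ext (h : IsFreeGradedPreLie k V A 𝒜 mul ι circ) {ℬ : ℕ → Submodule k B}
    {mulB : B →ₗ[k] B →ₗ[k] B} (hB : IsGradedPreLie ℬ mulB) {g₁ g₂ : A →ₗ[k] B}
    (hg₁ : ∀ i x, x ∈ 𝒜 i → g₁ x ∈ ℬ i) (hmul₁ : ∀ x y, g₁ (mul x y) = mulB (g₁ x) (g₁ y))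
    (hg₂ : ∀ i x, x ∈ 𝒜 i → g₂ x ∈ ℬ i) (hmul₂ : ∀ x y, g₂ (mul x y) = mulB (g₂ x) (g₂ y))
    (hι : ∀ v, g₁ (ι v) = g₂ (ι v)) (hcirc : g₁ circ = g₂ circ) : g₁ = g₂ :=
  (h.lift B ℬ mulB hB.internal hB.mul_mem hB.assoc_swap (g₁ ∘ₗ ι)
    (fun v => hg₁ 0 _ (h.ι_mem v)) (g₁ circ) (hg₁ 1 _ h.circ_mem)).unique
    ⟨hg₁, hmul₁, fun _ => rfl, rfl⟩ ⟨hg₂, hmul₂, fun v => (hι v).symm, hcirc.symm⟩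

theorem exists_lift_of_iSupIndep (h : IsFreeGradedPreLie k V A 𝒜 mul ι circ)
    {S : ℕ → Submodule k B} {mulB : B →ₗ[k] B →ₗ[k] B} (hind : iSupIndep S)
    (hS : ∀ i j x y, x ∈ S i → y ∈ S j → mulB x y ∈ S (i + j))
    (hassoc : ∀ j l x y z, y ∈ S j → z ∈ S l →
      assoc mulB x y z = (-1 : k) ^ (j * l) • assoc mulB x z y)
    (f : V →ₗ[k] B) (hf : ∀ v, f v ∈ S 0) (b : B) (hb : b ∈ S 1) :
    ∃ g : A →ₗ[k] B, (∀ i x, x ∈ 𝒜 i → g x ∈ S i) ∧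
      (∀ x y, g (mul x y) = mulB (g x) (g y)) ∧ (∀ v, g (ι v) = f v) ∧ g circ = b := by
  have hT := isGradedPreLie_iSup hind hS hassoc
  obtain ⟨g, ⟨hg, hgmul, hgι, hgcirc⟩, -⟩ := h.lift _ _ _ hT.internal hT.mul_mem hT.assoc_swap
    (f.codRestrict _ fun v => Submodule.mem_iSup_of_mem 0 (hf v)) hf
    ⟨b, Submodule.mem_iSup_of_mem 1 hb⟩ hb
  exact ⟨(⨆ i, S i).subtype ∘ₗ g, hg, fun x y => congrArg Subtype.val (hgmul x y),
    fun v => congrArg Subtype.val (hgι v), congrArg Subtype.val hgcirc⟩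

theorem linearMap_eq_zero (h : IsFreeGradedPreLie k V A 𝒜 mul ι circ) (f : A →ₗ[k] B)
    (hι : ∀ v, f (ι v) = 0) (hcirc : f circ = 0)
    (hmul : ∀ i j x y, x ∈ 𝒜 i → y ∈ 𝒜 j → f x = 0 → f y = 0 → f (mul x y) = 0) : f = 0 := by
  obtain ⟨g, hg, hgmul, hgι, hgcirc⟩ := h.exists_lift_of_iSupIndep
    (S := fun i => 𝒜 i ⊓ LinearMap.ker f) (h.internal.submodule_iSupIndep.mono fun _ => inf_le_left)
    (fun i j x y hx hy => ⟨h.mul_mem i j x y hx.1 hy.1, hmul i j x y hx.1 hy.1 hx.2 hy.2⟩)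
    (fun j l x y z hy hz => h.preLie j l x y z hy.1 hz.1) ι (fun v => ⟨h.ι_mem v, hι v⟩)
    circ ⟨h.circ_mem, hcirc⟩
  have hid : g = LinearMap.id := h.hom_ext h.isGradedPreLie (fun i x hx => (hg i x hx).1) hgmul
    (fun _ _ hx => hx) (fun _ _ => rfl) hgι hgcirc
  exact h.internal.linearMap_ext fun i x hx => (hid ▸ hg i x hx).2

end IsFreeGradedPreLie

section MulIdeal

variable {R M : Type} [CommRing R] [AddCommGroup M] [Module R M] (m : M →ₗ[R] M →ₗ[R] M)
  (a : M)

def mulIdeal : Submodule R M :=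
  sInf {W | a ∈ W ∧ (∀ x y : M, x ∈ W → m x y ∈ W) ∧ (∀ x y : M, y ∈ W → m x y ∈ W)}

theorem mem_mulIdeal : a ∈ mulIdeal m a :=
  Submodule.mem_sInf.2 fun _ hW => hW.1

variable {m a}

theorem mul_mem_mulIdeal_left {x : M} (hx : x ∈ mulIdeal m a) (y : M) : m x y ∈ mulIdeal m a :=
  Submodule.mem_sInf.2 fun W hW => hW.2.1 x y (Submodule.mem_sInf.1 hx W hW)

theorem mul_mem_mulIdeal_right (x : M) {y : M} (hy : y ∈ mulIdeal m a) : m x y ∈ mulIdeal m a :=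
  Submodule.mem_sInf.2 fun W hW => hW.2.2 x y (Submodule.mem_sInf.1 hy W hW)

theorem mulIdeal_le {W : Submodule R M} (ha : a ∈ W) (hl : ∀ x y, x ∈ W → m x y ∈ W)
    (hr : ∀ x y, y ∈ W → m x y ∈ W) : mulIdeal m a ≤ W :=
  sInf_le ⟨ha, hl, hr⟩

theorem mulIdeal_le_ker {N : Type} [AddCommGroup N] [Module R N] {mulN : N →ₗ[R] N →ₗ[R] N}
    {g : M →ₗ[R] N} (hg : ∀ x y, g (m x y) = mulN (g x) (g y)) (ha : g a = 0) :
    mulIdeal m a ≤ LinearMap.ker g :=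
  mulIdeal_le ha (fun x y hx => by simp_all) (fun x y hy => by simp_all)

theorem mulIdeal_le_iSup_inf {ℳ : ℕ → Submodule R M} (hℳ : DirectSum.IsInternal ℳ)
    (hmul : ∀ i j x y, x ∈ ℳ i → y ∈ ℳ j → m x y ∈ ℳ (i + j)) {n : ℕ}
    (ha : a ∈ ℳ n) : mulIdeal m a ≤ ⨆ i, mulIdeal m a ⊓ ℳ i := by
  set S := fun i => mulIdeal m a ⊓ ℳ i
  have htop : ∀ y, y ∈ ⨆ i, ℳ i := fun y => hℳ.submodule_iSup_eq_top ▸ trivial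
  refine mulIdeal_le (Submodule.mem_iSup_of_mem n ⟨mem_mulIdeal m a, ha⟩) (fun x y hx => ?_)
    (fun x y hy => ?_)
  · exact mul_mem_iSup (S := S) (T := ℳ) (U := S) (fun i j x y hx hy =>
      ⟨mul_mem_mulIdeal_left hx.1 y, hmul i j x y hx.2 hy⟩) x hx y (htop y)
  · exact mul_mem_iSup (S := ℳ) (T := S) (U := S) (fun i j x y hx hy =>
      ⟨mul_mem_mulIdeal_right x hy.1, hmul i j x y hx hy.2⟩) x (htop x) y hy

end MulIdeal

section TwistedDerivation

variable {R M : Type} [CommRing R] [AddCommGroup M] [Module R M]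

structure IsTwistedDerivation (𝒬 : ℕ → Submodule R M) (m : M →ₗ[R] M →ₗ[R] M) (c : M)
    (d : M →ₗ[R] M) : Prop where
  map_le : ∀ i, (𝒬 i).map d ≤ 𝒬 (i + 1)
  map_circ : d c = 0
  map_mul : ∀ i a b, a ∈ 𝒬 i → d (m a b) = m (d a) b + (-1 : R) ^ i • m a (d b) + assoc m c a b

variable {𝒬 : ℕ → Submodule R M} {m : M →ₗ[R] M →ₗ[R] M} {c : M} {d d' : M →ₗ[R] M}

namespace IsTwistedDerivation

theorem sub_map_mul (hd : IsTwistedDerivation 𝒬 m c d) (hd' : IsTwistedDerivation 𝒬 m c d')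
    {i : ℕ} {a : M} (ha : a ∈ 𝒬 i) (b : M) :
    (d - d') (m a b) = m ((d - d') a) b + (-1 : R) ^ i • m a ((d - d') b) := by
  simp only [LinearMap.sub_apply, hd.map_mul i a b ha, hd'.map_mul i a b ha, map_sub,
    LinearMap.sub_apply, smul_sub]
  abel

theorem map_map_mul (hd : IsTwistedDerivation 𝒬 m c d)
    (hmul : ∀ i j x y, x ∈ 𝒬 i → y ∈ 𝒬 j → m x y ∈ 𝒬 (i + j)) (hc : c ∈ 𝒬 1) (hcc : m c c = 0)
    {i : ℕ} {a : M} (ha : a ∈ 𝒬 i) (b : M) :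
    d (d (m a b)) = m (d (d a)) b + m a (d (d b)) := by
  have hdc (x : M) : d (m c x) = -m c (d x) - m c (m c x) := by
    rw [hd.map_mul 1 c x hc, hd.map_circ, assoc, hcc]
    simp only [map_zero, LinearMap.zero_apply, pow_one, neg_smul, one_smul]
    abel
  rw [hd.map_mul i a b ha, map_add, map_add, map_smul, assoc, map_sub,
    hd.map_mul (i + 1) (d a) b (hd.map_le i ⟨a, ha, rfl⟩), hd.map_mul i a (d b) ha,
    hd.map_mul (1 + i) (m c a) b (hmul 1 i c a hc ha), hdc, hdc, hd.map_mul i a b ha]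
  have hsq : (-1 : R) ^ i * (-1 : R) ^ i = 1 := by rw [← mul_pow, neg_mul_neg, one_mul, one_pow]
  simp only [assoc, map_add, map_sub, map_neg, map_smul, LinearMap.sub_apply, LinearMap.neg_apply]
  linear_combination (norm := module) hsq • m a (d (d b))

end IsTwistedDerivation

end TwistedDerivation

section Quotient

variable {k V A B : Type} [Field k] [AddCommGroup V] [Module k V] [AddCommGroup A] [Module k A]
  [AddCommGroup B] [Module k B]
  {𝒜 : ℕ → Submodule k A} {mul : A →ₗ[k] A →ₗ[k] A} {ι : V →ₗ[k] A} {circ : A}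
  {I : Submodule k A} {mulQ : (A ⧸ I) →ₗ[k] (A ⧸ I) →ₗ[k] (A ⧸ I)}

theorem IsFreeGradedPreLie.linearMap_quotient_eq_zero
    (h : IsFreeGradedPreLie k V A 𝒜 mul ι circ)
    (hmulQ : ∀ x y, mulQ (I.mkQ x) (I.mkQ y) = I.mkQ (mul x y)) (f : (A ⧸ I) →ₗ[k] B)
    (hι : ∀ v, f (I.mkQ (ι v)) = 0) (hcirc : f (I.mkQ circ) = 0)
    (hmul : ∀ i j a b, a ∈ (𝒜 i).map I.mkQ → b ∈ (𝒜 j).map I.mkQ → f a = 0 → f b = 0 →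
      f (mulQ a b) = 0) : f = 0 :=
  Submodule.linearMap_qext _ <| h.linearMap_eq_zero (f ∘ₗ I.mkQ) hι hcirc
    fun i j x y hx hy hfx hfy => by
      simpa [← hmulQ] using hmul i j _ _ ⟨x, hx, rfl⟩ ⟨y, hy, rfl⟩ hfx hfy

theorem IsFreeGradedPreLie.isGradedPreLie_quotient (h : IsFreeGradedPreLie k V A 𝒜 mul ι circ)
    (hI : I = mulIdeal mul (mul circ circ))
    (hmulQ : ∀ x y, mulQ (I.mkQ x) (I.mkQ y) = I.mkQ (mul x y)) :
    IsGradedPreLie (fun i => (𝒜 i).map I.mkQ) mulQ :=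
  h.isGradedPreLie.quotient (hI ▸ mulIdeal_le_iSup_inf h.internal h.mul_mem
    (h.mul_mem 1 1 _ _ h.circ_mem h.circ_mem)) mulQ hmulQ

theorem mulQ_circ_circ (hI : I = mulIdeal mul (mul circ circ))
    (hmulQ : ∀ x y, mulQ (I.mkQ x) (I.mkQ y) = I.mkQ (mul x y)) :
    mulQ (I.mkQ circ) (I.mkQ circ) = 0 := by
  rw [hmulQ, Submodule.mkQ_apply, Submodule.Quotient.mk_eq_zero, hI]
  exact mem_mulIdeal mul _

theorem IsFreeGradedPreLie.exists_isTwistedDerivation_quotient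
    (h : IsFreeGradedPreLie k V A 𝒜 mul ι circ) (hI : I = mulIdeal mul (mul circ circ))
    (hmulQ : ∀ x y, mulQ (I.mkQ x) (I.mkQ y) = I.mkQ (mul x y)) :
    ∃ d, IsTwistedDerivation (fun i => (𝒜 i).map I.mkQ) mulQ (I.mkQ circ) d ∧
      ∀ v, d (I.mkQ (ι v)) = 0 := by
  have hQ := h.isGradedPreLie_quotient hI hmulQ
  have hc : I.mkQ circ ∈ (𝒜 1).map I.mkQ := ⟨circ, h.circ_mem, rfl⟩
  have hE (i : ℕ) (x) (hx : x ∈ (𝒜 i).map I.mkQ) := hQ.internal.parity_of_mem hx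
  obtain ⟨G, hG, hGmul, hGι, hGcirc⟩ := h.exists_lift_of_iSupIndep
    (iSupIndep_sqZeroGrading hQ.internal.submodule_iSupIndep)
    (fun i j X Y => sqZeroMul_mem hQ.mul_mem hE hc)
    (fun j l X Y Z => sqZeroMul_assoc_swap hQ.assoc_swap hE (hQ.internal.parity_mul hQ.mul_mem) X)
    (LinearMap.inl k _ _ ∘ₗ I.mkQ ∘ₗ ι) (fun v => ⟨⟨ι v, h.ι_mem v, rfl⟩, zero_mem _⟩)
    (I.mkQ circ, 0) ⟨hc, zero_mem _⟩
  have hfst : LinearMap.fst k _ _ ∘ₗ G = I.mkQ := h.hom_ext hQ (fun i x hx => (hG i x hx).1)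
    (fun x y => by simp [hGmul, sqZeroMul_apply]) (fun i x hx => ⟨x, hx, rfl⟩)
    (fun x y => (hmulQ x y).symm) (fun v => by simp [hGι]) (by simp [hGcirc])
  have hcc := mulQ_circ_circ hI hmulQ
  have hker : I ≤ LinearMap.ker G := hI.le.trans <| mulIdeal_le_ker hGmul <| by
    simp only [hGmul, hGcirc, sqZeroMul_apply, assoc, hcc, map_zero, LinearMap.zero_apply,
      add_zero, sub_self, Prod.mk_zero_zero]
  refine ⟨I.liftQ (LinearMap.snd k _ _ ∘ₗ G) (hker.trans (LinearMap.ker_le_ker_comp G _)),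
    ⟨?_, by simp [hGcirc], ?_⟩, fun v => by simp [hGι]⟩
  · rintro i _ ⟨_, ⟨x, hx, rfl⟩, rfl⟩
    exact (hG i x hx).2
  · rintro i _ b ⟨x, hx, rfl⟩
    obtain ⟨y, rfl⟩ := I.mkQ_surjective b
    have hG₁ (z : A) : (G z).1 = I.mkQ z := LinearMap.congr_fun hfst z
    rw [hmulQ]
    change (G (mul x y)).2 = mulQ (G x).2 (I.mkQ y) + _ • mulQ (I.mkQ x) (G y).2 + _
    rw [hGmul, sqZeroMul_apply, hG₁, hG₁, hE i _ ⟨x, hx, rfl⟩, map_smul, LinearMap.smul_apply]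

theorem IsFreeGradedPreLie.twistedDerivation_quotient_unique
    (h : IsFreeGradedPreLie k V A 𝒜 mul ι circ)
    (hmulQ : ∀ x y, mulQ (I.mkQ x) (I.mkQ y) = I.mkQ (mul x y)) {d d' : (A ⧸ I) →ₗ[k] (A ⧸ I)}
    (hd : IsTwistedDerivation (fun i => (𝒜 i).map I.mkQ) mulQ (I.mkQ circ) d)
    (hd' : IsTwistedDerivation (fun i => (𝒜 i).map I.mkQ) mulQ (I.mkQ circ) d')
    (hι : ∀ v, d (I.mkQ (ι v)) = 0) (hι' : ∀ v, d' (I.mkQ (ι v)) = 0) : d = d' := by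
  refine sub_eq_zero.1 (h.linearMap_quotient_eq_zero hmulQ _
    (fun v => by rw [LinearMap.sub_apply, hι, hι', sub_zero])
    (by rw [LinearMap.sub_apply, hd.map_circ, hd'.map_circ, sub_zero])
    fun i j a b ha hb hfa hfb => ?_)
  rw [hd.sub_map_mul hd' ha, hfa, hfb, map_zero, LinearMap.zero_apply, map_zero, smul_zero,
    add_zero]

theorem IsFreeGradedPreLie.twistedDerivation_quotient_comp_self
    (h : IsFreeGradedPreLie k V A 𝒜 mul ι circ) (hI : I = mulIdeal mul (mul circ circ))
    (hmulQ : ∀ x y, mulQ (I.mkQ x) (I.mkQ y) = I.mkQ (mul x y)) {d : (A ⧸ I) →ₗ[k] (A ⧸ I)}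
    (hd : IsTwistedDerivation (fun i => (𝒜 i).map I.mkQ) mulQ (I.mkQ circ) d)
    (hι : ∀ v, d (I.mkQ (ι v)) = 0) : d ∘ₗ d = 0 :=
  h.linearMap_quotient_eq_zero hmulQ _ (fun v => by rw [LinearMap.comp_apply, hι, map_zero])
    (by rw [LinearMap.comp_apply, hd.map_circ, map_zero]) fun i j a b ha hb hfa hfb => by
      rw [LinearMap.comp_apply, hd.map_map_mul (h.isGradedPreLie_quotient hI hmulQ).mul_mem
        ⟨circ, h.circ_mem, rfl⟩ (mulQ_circ_circ hI hmulQ) ha, ← LinearMap.comp_apply d d,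
        ← LinearMap.comp_apply d d, hfa, hfb, map_zero, LinearMap.zero_apply, map_zero, add_zero]

end Quotient

theorem exists_unique_d_on_rpL_general {k V A : Type} [Field k]
    [AddCommGroup V] [Module k V] [AddCommGroup A] [Module k A]
    (𝒜 : ℕ → Submodule k A) (mul : A →ₗ[k] A →ₗ[k] A)
    (ι : V →ₗ[k] A) (circ : A)
    (h : IsFreeGradedPreLie k V A 𝒜 mul ι circ)
    (I : Submodule k A)
    (hI : I = sInf {W : Submodule k A | mul circ circ ∈ W ∧
      (∀ x y : A, x ∈ W → mul x y ∈ W) ∧ (∀ x y : A, y ∈ W → mul x y ∈ W)})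
    (mulQ : (A ⧸ I) →ₗ[k] (A ⧸ I) →ₗ[k] (A ⧸ I))
    (hmulQ : ∀ x y : A, mulQ (I.mkQ x) (I.mkQ y) = I.mkQ (mul x y)) :
    (∃! d : (A ⧸ I) →ₗ[k] (A ⧸ I),
      (∀ i : ℕ, Submodule.map d (Submodule.map I.mkQ (𝒜 i))
        ≤ Submodule.map I.mkQ (𝒜 (i + 1))) ∧
      (∀ v : V, d (I.mkQ (ι v)) = 0) ∧ d (I.mkQ circ) = 0 ∧
      (∀ (i : ℕ) (a b : A ⧸ I), a ∈ Submodule.map I.mkQ (𝒜 i) →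
        d (mulQ a b) = mulQ (d a) b + ((-1 : k) ^ i) • mulQ a (d b)
          + (mulQ (mulQ (I.mkQ circ) a) b - mulQ (I.mkQ circ) (mulQ a b)))) ∧
    (∀ d : (A ⧸ I) →ₗ[k] (A ⧸ I),
      (∀ i : ℕ, Submodule.map d (Submodule.map I.mkQ (𝒜 i))
        ≤ Submodule.map I.mkQ (𝒜 (i + 1))) →
      (∀ v : V, d (I.mkQ (ι v)) = 0) → d (I.mkQ circ) = 0 →
      (∀ (i : ℕ) (a b : A ⧸ I), a ∈ Submodule.map I.mkQ (𝒜 i) →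
        d (mulQ a b) = mulQ (d a) b + ((-1 : k) ^ i) • mulQ a (d b)
          + (mulQ (mulQ (I.mkQ circ) a) b - mulQ (I.mkQ circ) (mulQ a b))) →
      d.comp d = 0) := by
  obtain ⟨d, hd, hdι⟩ := h.exists_isTwistedDerivation_quotient hI hmulQ
  refine ⟨⟨d, ⟨hd.map_le, hdι, hd.map_circ, hd.map_mul⟩, fun d' ⟨hle', hι', hcirc', hmul'⟩ =>
    h.twistedDerivation_quotient_unique hmulQ ⟨hle', hcirc', hmul'⟩ hd hι' hdι⟩,
    fun d' hle' hι' hcirc' hmul' =>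
      h.twistedDerivation_quotient_comp_self hI hmulQ ⟨hle', hcirc', hmul'⟩ hι'⟩

/-- On the quotient `rpL*(V) = pL*(V,∘)/(∘⋆∘)` of the free graded pre-Lie algebra by
the ideal generated by `∘⋆∘`, there is a unique degree `+1` map `d` with `d(v)=0`
for `v ∈ V`, `d(∘)=0`, and `d(a⋆b) = d(a)⋆b + (−1)^{|a|} a⋆d(b) + Φ(∘,a,b)`;
moreover `d² = 0`. -/
theorem exists_unique_d_on_rpL {k V A : Type} [Field k] [CharZero k]
    [AddCommGroup V] [Module k V] [AddCommGroup A] [Module k A]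
    (𝒜 : ℕ → Submodule k A) (mul : A →ₗ[k] A →ₗ[k] A)
    (ι : V →ₗ[k] A) (circ : A)
    (h : IsFreeGradedPreLie k V A 𝒜 mul ι circ)
    (I : Submodule k A)
    (hI : I = sInf {W : Submodule k A | mul circ circ ∈ W ∧
      (∀ x y : A, x ∈ W → mul x y ∈ W) ∧ (∀ x y : A, y ∈ W → mul x y ∈ W)})
    (mulQ : (A ⧸ I) →ₗ[k] (A ⧸ I) →ₗ[k] (A ⧸ I))
    (hmulQ : ∀ x y : A, mulQ (I.mkQ x) (I.mkQ y) = I.mkQ (mul x y)) :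
    (∃! d : (A ⧸ I) →ₗ[k] (A ⧸ I),
      (∀ i : ℕ, Submodule.map d (Submodule.map I.mkQ (𝒜 i))
        ≤ Submodule.map I.mkQ (𝒜 (i + 1))) ∧
      (∀ v : V, d (I.mkQ (ι v)) = 0) ∧ d (I.mkQ circ) = 0 ∧
      (∀ (i : ℕ) (a b : A ⧸ I), a ∈ Submodule.map I.mkQ (𝒜 i) →
        d (mulQ a b) = mulQ (d a) b + ((-1 : k) ^ i) • mulQ a (d b)
          + (mulQ (mulQ (I.mkQ circ) a) b - mulQ (I.mkQ circ) (mulQ a b)))) ∧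
    (∀ d : (A ⧸ I) →ₗ[k] (A ⧸ I),
      (∀ i : ℕ, Submodule.map d (Submodule.map I.mkQ (𝒜 i))
        ≤ Submodule.map I.mkQ (𝒜 (i + 1))) →
      (∀ v : V, d (I.mkQ (ι v)) = 0) → d (I.mkQ circ) = 0 →
      (∀ (i : ℕ) (a b : A ⧸ I), a ∈ Submodule.map I.mkQ (𝒜 i) →
        d (mulQ a b) = mulQ (d a) b + ((-1 : k) ^ i) • mulQ a (d b)
          + (mulQ (mulQ (I.mkQ circ) a) b - mulQ (I.mkQ circ) (mulQ a b))) →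
      d.comp d = 0) :=
  exists_unique_d_on_rpL_general 𝒜 mul ι circ h I hI mulQ hmulQ
end

section
/- The Lie subalgebra of the free pre-Lie algebra pL(V) (with commutator bracket of the pre-Lie product) generated by V is isomorphic, as a Lie algebra, to the free Lie algebra on V. -/
/-- The universal property of the free pre-Lie algebra on a vector space `V`:
`P` with pre-Lie product `mul` and structure map `ι` is free if every linear map
from `V` to a pre-Lie algebra extends uniquely to a product-preserving linear map. -/
structure IsFreePreLie (k : Type) [Field k] (V : Type) [AddCommGroup V] [Module k V]
    (P : Type) [AddCommGroup P] [Module k P]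
    (mul : P →ₗ[k] P →ₗ[k] P) (ι : V →ₗ[k] P) : Prop where
  preLie : ∀ x y z : P,
    mul (mul x y) z - mul x (mul y z) = mul (mul x z) y - mul x (mul z y)
  lift : ∀ (Q : Type) [AddCommGroup Q] [Module k Q] (m : Q →ₗ[k] Q →ₗ[k] Q),
    (∀ x y z : Q, m (m x y) z - m x (m y z) = m (m x z) y - m x (m z y)) →
    ∀ f : V →ₗ[k] Q, ∃! g : P →ₗ[k] Q,
      (∀ v, g (ι v) = f v) ∧ ∀ x y, g (mul x y) = m (g x) (g y)

/-- The Lie subalgebra (as a subspace) generated by the image of `ι`, for the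
commutator bracket of `mul`. -/
def lieClosure {k : Type} [Field k] {V : Type} [AddCommGroup V] [Module k V]
    {P : Type} [AddCommGroup P] [Module k P]
    (mul : P →ₗ[k] P →ₗ[k] P) (ι : V →ₗ[k] P) : Submodule k P :=
  sInf {W : Submodule k P |
    (∀ v : V, ι v ∈ W) ∧ ∀ x ∈ W, ∀ y ∈ W, mul x y - mul y x ∈ W}

/-! The tensor algebra `T(V)` is associative, hence pre-Lie, so the universal property of `pL(V)`
maps its Lie elements to Lie polynomials in `T(V)`. For `f : V → 𝔤`, let `ρ : T(V) → End 𝔤`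
extend `ad ∘ f` and let `γ (v₁ ⋯ vₙ) = ⁅f v₁, ⁅f v₂, …, f vₙ⁆⁆`; then `γ (a * b) = ρ a (γ b)` when
`b` has positive degree. By induction, a Lie word `a` of degree `n` with value `x` in `𝔤`
satisfies `ρ a = ad x` and `γ a = n • x`, so the Dynkin–Specht–Wever map, `γ / n` in degree `n`
(characteristic zero), is a Lie algebra map on Lie polynomials. Composing it with `pL(V) → T(V)`
extends `f`, uniquely since `lieClosure mul ι` is generated by `V`. -/

attribute [local instance] LieRing.ofAssociativeRing

theorem Submodule.lie_mem_span_of_lie_mem {R L : Type*} [CommRing R] [LieRing L]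
    [LieAlgebra R L] {s : Set L} (hs : ∀ x ∈ s, ∀ y ∈ s, ⁅x, y⁆ ∈ s) {x y : L}
    (hx : x ∈ span R s) (hy : y ∈ span R s) : ⁅x, y⁆ ∈ span R s := by
  have h := apply_mem_map₂ (LieModule.toEnd R L L).toLinearMap hx hy
  rw [map₂_span_span] at h
  refine span_le.2 ?_ h
  rintro _ ⟨a, ha, b, hb, rfl⟩
  exact subset_span (hs a ha b hb)

namespace TensorAlgebra

section CommRing

variable {R V L : Type*} [CommRing R] [AddCommGroup V] [Module R V] [LieRing L]
  [LieAlgebra R L]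

variable (R L) in
/-- Through these operators a tensor sends `(0, 1)` to its right-normed bracketing paired with
its augmentation (`adAugmentedRep_apply`). -/
def adAugmented : L →ₗ[R] Module.End R (L × R) :=
  LinearMap.mk₂ R (fun x p => (⁅x, p.1⁆ + p.2 • x, 0))
    (fun x y p => by ext <;> simp; abel)
    (fun c x p => by ext <;> simp [smul_comm c])
    (fun x p q => by ext <;> simp [add_smul]; abel)
    (fun c x p => by ext <;> simp [smul_smul])

variable (f : V →ₗ[R] L)

def adRep : TensorAlgebra R V →ₐ[R] Module.End R L :=
  lift R ((LieAlgebra.ad R L).toLinearMap ∘ₗ f)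

def adAugmentedRep : TensorAlgebra R V →ₐ[R] Module.End R (L × R) :=
  lift R (adAugmented R L ∘ₗ f)

def rightNormedBracket : TensorAlgebra R V →ₗ[R] L :=
  LinearMap.fst R L R ∘ₗ LinearMap.applyₗ ((0 : L), (1 : R)) ∘ₗ (adAugmentedRep f).toLinearMap

lemma adAugmentedRep_apply (a : TensorAlgebra R V) (p : L × R) :
    adAugmentedRep f a p =
      (adRep f a p.1 + p.2 • rightNormedBracket f a, algebraMapInv a * p.2) := by
  induction a using TensorAlgebra.induction generalizing p with
  | algebraMap r =>
    simp [rightNormedBracket, adRep, adAugmentedRep, Algebra.algebraMap_eq_smul_one, algebraMapInv]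
    rfl
  | ι v =>
    simp [rightNormedBracket, adRep, adAugmentedRep, adAugmented, algebraMapInv]
  | mul a b ha hb =>
    have hab : rightNormedBracket f (a * b) =
        adRep f a (rightNormedBracket f b) + algebraMapInv b • rightNormedBracket f a := by
      change (adAugmentedRep f (a * b) (0, 1)).1 = _
      rw [map_mul, Module.End.mul_apply, hb, ha]
      simp
    rw [map_mul, Module.End.mul_apply, hb, ha, hab]
    ext
    · simp [smul_smul, mul_comm, add_assoc]
    · simp only [map_mul]; ring
  | add a b ha hb =>
    simp only [map_add, LinearMap.add_apply, ha, hb]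
    ext <;> simp [add_mul]; abel

lemma rightNormedBracket_mul (a b : TensorAlgebra R V) :
    rightNormedBracket f (a * b) =
      adRep f a (rightNormedBracket f b) + algebraMapInv b • rightNormedBracket f a := by
  change (adAugmentedRep f (a * b) (0, 1)).1 = _
  simp [adAugmentedRep_apply]

@[simp]
lemma rightNormedBracket_ι (v : V) : rightNormedBracket f (ι R v) = f v := by
  simp [rightNormedBracket, adAugmentedRep, adAugmented]

@[simp]
lemma adRep_ι (v : V) : adRep f (ι R v) = LieAlgebra.ad R L (f v) := by
  simp [adRep]

lemma algebraMapInv_eq_zero_of_mem_pow_s13 {n : ℕ} (hn : n ≠ 0) {a : TensorAlgebra R V}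
    (ha : a ∈ LinearMap.range (ι R : V →ₗ[R] TensorAlgebra R V) ^ n) :
    algebraMapInv a = 0 := by
  obtain ⟨m, rfl⟩ := Nat.exists_eq_succ_of_ne_zero hn
  rw [pow_succ] at ha
  refine (Submodule.mul_le (P := LinearMap.ker algebraMapInv.toLinearMap)).2 ?_ ha
  rintro b - _ ⟨v, rfl⟩
  simp [algebraMapInv]

def IsDynkinPair (p : TensorAlgebra R V × L) : Prop :=
  ∃ n ≠ 0, p.1 ∈ LinearMap.range (ι R : V →ₗ[R] TensorAlgebra R V) ^ n ∧
    adRep f p.1 = LieAlgebra.ad R L p.2 ∧ rightNormedBracket f p.1 = n • p.2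

lemma isDynkinPair_ι (v : V) : IsDynkinPair f (ι R v, f v) :=
  ⟨1, one_ne_zero, by simp, by simp, by simp⟩

lemma IsDynkinPair.lie {a b : TensorAlgebra R V} {x y : L} (hp : IsDynkinPair f (a, x))
    (hq : IsDynkinPair f (b, y)) : IsDynkinPair f ⁅(a, x), (b, y)⁆ := by
  obtain ⟨m, hm, ha, ha_ad, ha_br⟩ := hp
  obtain ⟨n, hn, hb, hb_ad, hb_br⟩ := hq
  refine ⟨m + n, by omega, ?_, ?_, ?_⟩ <;> dsimp only [LieAlgebra.Prod.bracket_apply] at *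
  · rw [LieRing.of_associative_ring_bracket]
    refine Submodule.sub_mem _ ?_ ?_
    · rw [pow_add]; exact Submodule.mul_mem_mul ha hb
    · rw [add_comm, pow_add]; exact Submodule.mul_mem_mul hb ha
  · rw [LieHom.map_lie, ← ha_ad, ← hb_ad]
    exact (adRep f).toLieHom.map_lie a b
  · rw [LieRing.of_associative_ring_bracket, map_sub,
      rightNormedBracket_mul, rightNormedBracket_mul, algebraMapInv_eq_zero_of_mem_pow_s13 hm ha,
      algebraMapInv_eq_zero_of_mem_pow_s13 hn hb, ha_ad, hb_ad, ha_br, hb_br]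
    simp only [zero_smul, add_zero, LieAlgebra.ad_apply, lie_nsmul, nsmul_lie, ← lie_skew y,
      add_nsmul]
    abel

def dynkinPairSpan : LieSubalgebra R (TensorAlgebra R V × L) :=
  { Submodule.span R {p | IsDynkinPair f p} with
    lie_mem' := Submodule.lie_mem_span_of_lie_mem fun _ hp _ hq => hp.lie f hq }

end CommRing

section Field

variable {k V L : Type*} [Field k] [AddCommGroup V] [Module k V] [LieRing L]
  [LieAlgebra k L] (f : V →ₗ[k] L)

def dynkinMap : TensorAlgebra k V →ₗ[k] L :=
  DirectSum.toModule k ℕ L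
      (fun n => (n : k)⁻¹ • (rightNormedBracket f ∘ₗ (LinearMap.range (ι k) ^ n).subtype)) ∘ₗ
    (DirectSum.decomposeLinearEquiv (fun n => LinearMap.range (ι k : V →ₗ[k] _) ^ n)).toLinearMap

lemma dynkinMap_of_mem {n : ℕ} {a : TensorAlgebra k V}
    (ha : a ∈ LinearMap.range (ι k : V →ₗ[k] TensorAlgebra k V) ^ n) :
    dynkinMap f a = (n : k)⁻¹ • rightNormedBracket f a := by
  simp only [dynkinMap, LinearMap.comp_apply, LinearEquiv.coe_coe,
    DirectSum.decomposeLinearEquiv_apply, DirectSum.decompose_of_mem _ ha,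
    ← DirectSum.lof_eq_of k, DirectSum.toModule_lof]
  rfl

lemma IsDynkinPair.dynkinMap_eq [CharZero k] {p : TensorAlgebra k V × L}
    (hp : IsDynkinPair f p) : dynkinMap f p.1 = p.2 := by
  obtain ⟨n, hn, hp₁, -, hp_br⟩ := hp
  rw [dynkinMap_of_mem f hp₁, hp_br, ← Nat.cast_smul_eq_nsmul k,
    inv_smul_smul₀ (Nat.cast_ne_zero.2 hn)]

lemma dynkinMap_eq_of_mem_lieSpan [CharZero k] {p : TensorAlgebra k V × L}
    (hp : p ∈ LieSubalgebra.lieSpan k _ (Set.range fun v => (ι k v, f v))) :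
    dynkinMap f p.1 = p.2 := by
  have hspan : LieSubalgebra.lieSpan k _ (Set.range fun v => (ι k v, f v)) ≤ dynkinPairSpan f :=
    LieSubalgebra.lieSpan_le.2 <| Set.range_subset_iff.2 fun v =>
      Submodule.subset_span (isDynkinPair_ι f v)
  have hgraph : Submodule.span k {p | IsDynkinPair f p} ≤
      LinearMap.ker (dynkinMap f ∘ₗ LinearMap.fst k _ L - LinearMap.snd k _ L) :=
    Submodule.span_le.2 fun p hp => by simp [IsDynkinPair.dynkinMap_eq f hp]
  simpa [sub_eq_zero] using hgraph (hspan hp)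

lemma mk_dynkinMap_mem_lieSpan [CharZero k] {a : TensorAlgebra k V}
    (ha : a ∈ LieSubalgebra.lieSpan k _ (Set.range (ι k))) :
    (a, dynkinMap f a) ∈ LieSubalgebra.lieSpan k _ (Set.range fun v => (ι k v, f v)) := by
  induction ha using LieSubalgebra.lieSpan_induction with
  | mem _ h =>
    obtain ⟨v, rfl⟩ := h
    rw [(isDynkinPair_ι f v).dynkinMap_eq]
    exact LieSubalgebra.subset_lieSpan ⟨v, rfl⟩
  | zero =>
    rw [map_zero, Prod.mk_zero_zero]
    exact LieSubalgebra.zero_mem _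
  | add a b _ _ ha hb => simpa using LieSubalgebra.add_mem _ ha hb
  | smul c a _ ha => simpa using LieSubalgebra.smul_mem _ c ha
  | lie a b _ _ ha hb =>
    have hab := LieSubalgebra.lie_mem _ ha hb
    rw [LieAlgebra.Prod.bracket_apply] at hab
    rwa [dynkinMap_eq_of_mem_lieSpan f hab]

theorem dynkinMap_lie [CharZero k] {a b : TensorAlgebra k V}
    (ha : a ∈ LieSubalgebra.lieSpan k _ (Set.range (ι k)))
    (hb : b ∈ LieSubalgebra.lieSpan k _ (Set.range (ι k))) :
    dynkinMap f ⁅a, b⁆ = ⁅dynkinMap f a, dynkinMap f b⁆ :=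
  dynkinMap_eq_of_mem_lieSpan f
    (LieSubalgebra.lie_mem _ (mk_dynkinMap_mem_lieSpan f ha) (mk_dynkinMap_mem_lieSpan f hb))

end Field
end TensorAlgebra

section LieClosure

variable {k V P : Type} [Field k] [AddCommGroup V] [Module k V] [AddCommGroup P] [Module k P]
  {mul : P →ₗ[k] P →ₗ[k] P} {ι : V →ₗ[k] P}

lemma lieClosure_le {W : Submodule k P} (hι : ∀ v, ι v ∈ W)
    (hmul : ∀ x ∈ W, ∀ y ∈ W, mul x y - mul y x ∈ W) : lieClosure mul ι ≤ W :=
  sInf_le ⟨hι, hmul⟩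

lemma apply_mem_lieClosure (v : V) : ι v ∈ lieClosure mul ι :=
  Submodule.mem_sInf.2 fun _ hW => hW.1 v

lemma sub_mem_lieClosure {x y : P} (hx : x ∈ lieClosure mul ι) (hy : y ∈ lieClosure mul ι) :
    mul x y - mul y x ∈ lieClosure mul ι :=
  Submodule.mem_sInf.2 fun W hW =>
    hW.2 x (Submodule.mem_sInf.1 hx W hW) y (Submodule.mem_sInf.1 hy W hW)

lemma lieClosure_le_comap_lieSpan {A : Type} [Ring A] [Algebra k A] {φ : P →ₗ[k] A}
    {ι' : V →ₗ[k] A} (hφι : ∀ v, φ (ι v) = ι' v) (hφmul : ∀ x y, φ (mul x y) = φ x * φ y) :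
    lieClosure mul ι ≤ (LieSubalgebra.lieSpan k A (Set.range ι')).toSubmodule.comap φ :=
  lieClosure_le (fun v => by
      rw [Submodule.mem_comap, hφι]
      exact LieSubalgebra.subset_lieSpan ⟨v, rfl⟩)
    fun x hx y hy => by
      rw [Submodule.mem_comap, map_sub, hφmul, hφmul]
      exact LieSubalgebra.lie_mem _ hx hy

lemma lieClosure_linearMap_ext {L : Type*} [LieRing L] [LieAlgebra k L]
    {g g' : lieClosure mul ι →ₗ[k] L} (hι : ∀ v hv, g ⟨ι v, hv⟩ = g' ⟨ι v, hv⟩)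
    (hg : ∀ (x y : lieClosure mul ι) (hxy : mul x.1 y.1 - mul y.1 x.1 ∈ lieClosure mul ι),
      g ⟨mul x.1 y.1 - mul y.1 x.1, hxy⟩ = ⁅g x, g y⁆)
    (hg' : ∀ (x y : lieClosure mul ι) (hxy : mul x.1 y.1 - mul y.1 x.1 ∈ lieClosure mul ι),
      g' ⟨mul x.1 y.1 - mul y.1 x.1, hxy⟩ = ⁅g' x, g' y⁆) :
    g = g' := by
  have hle : lieClosure mul ι ≤ (LinearMap.eqLocus g g').map (lieClosure mul ι).subtype := by
    refine lieClosure_le (fun v => ⟨⟨ι v, apply_mem_lieClosure v⟩, hι _ _, rfl⟩) ?_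
    rintro _ ⟨x, hx, rfl⟩ _ ⟨y, hy, rfl⟩
    have hxy := sub_mem_lieClosure x.2 y.2
    refine ⟨⟨_, hxy⟩, ?_, rfl⟩
    change g _ = g' _
    rw [hg, hg', LinearMap.mem_eqLocus.1 hx, LinearMap.mem_eqLocus.1 hy]
  ext z
  obtain ⟨z', hz', hz'z⟩ := hle z.2
  rw [← Subtype.ext hz'z]
  exact hz'

end LieClosure

/-- The Lie subalgebra of the free pre-Lie algebra `pL(V)` (commutator bracket)
generated by `V` is isomorphic, as a Lie algebra, to the free Lie algebra on `V`:
it satisfies the universal property of the free Lie algebra on the vector space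
`V`. -/
theorem lie_elements_free_lie {k V P : Type} [Field k] [CharZero k]
    [AddCommGroup V] [Module k V] [AddCommGroup P] [Module k P]
    (mul : P →ₗ[k] P →ₗ[k] P) (ι : V →ₗ[k] P)
    (h : IsFreePreLie k V P mul ι) :
    ∀ (𝔤 : Type) [LieRing 𝔤] [LieAlgebra k 𝔤] (f : V →ₗ[k] 𝔤),
      ∃! g : (lieClosure mul ι) →ₗ[k] 𝔤,
        (∀ (v : V) (hv : ι v ∈ lieClosure mul ι), g ⟨ι v, hv⟩ = f v) ∧
        ∀ (x y : lieClosure mul ι)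
          (hxy : mul (x : P) (y : P) - mul (y : P) (x : P) ∈ lieClosure mul ι),
          g ⟨mul (x : P) (y : P) - mul (y : P) (x : P), hxy⟩ = ⁅g x, g y⁆ := by
  intro 𝔤 _ _ f
  obtain ⟨φ, ⟨hφι, hφmul⟩, -⟩ := h.lift (TensorAlgebra k V) (LinearMap.mul k _)
    (fun x y z => by simp [mul_assoc]) (TensorAlgebra.ι k)
  have hφL := lieClosure_le_comap_lieSpan hφι hφmul
  let g := TensorAlgebra.dynkinMap f ∘ₗ φ ∘ₗ (lieClosure mul ι).subtype
  have hgι : ∀ v hv, g ⟨ι v, hv⟩ = f v := fun v _ => by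
    simp [g, hφι, (TensorAlgebra.isDynkinPair_ι f v).dynkinMap_eq]
  have hglie : ∀ (x y : lieClosure mul ι)
      (hxy : mul (x : P) (y : P) - mul (y : P) (x : P) ∈ lieClosure mul ι),
      g ⟨mul (x : P) (y : P) - mul (y : P) (x : P), hxy⟩ = ⁅g x, g y⁆ := fun x y _ => by
    simpa [g, hφmul, LieRing.of_associative_ring_bracket] using
      TensorAlgebra.dynkinMap_lie f (hφL x.2) (hφL y.2)
  exact ⟨g, ⟨hgι, hglie⟩, fun g' ⟨hg'ι, hg'lie⟩ =>
    lieClosure_linearMap_ext (fun v hv => (hg'ι v hv).trans (hgι v hv).symm) hg'lie hglie⟩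
end

section
/- Let S : pL(V)⊗pL(V) → T̄(V)⊗T̄(V) be a symmetric linear map such that S(a,b)*p(c) + S(a⋆b, c) − S(a, b⋆c) is symmetric in b and c. Then there exists exactly one linear map F : pL(V) → T̄(V)⊗T̄(V) with F(v)=0 for all v∈V and F(a⋆b) = F(a)*p(b) + p(a)*F(b) + S(a,b) for all a,b ∈ pL(V). -/
open scoped TensorProduct

lemma preLie_expand_aux {M : Type*} [Ring M]
    (Eb Ec Db Dc Da ξ η ζ Sab Sac Sbc Scb Sabc Sacb Sabc' Sacb' Tb Tc : M)
    (key : Sab * Ec + Sabc - Sabc' = Sac * Eb + Sacb - Sacb')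
    (hsym : Sbc = Scb) :
    (ξ * Eb + Da * η + Sab) * Ec + Da * Db * ζ + Sabc
      - (ξ * (Eb * Ec - (Tc + Tb)) + Da * (η * Ec + Db * ζ + Sbc) + Sabc')
    = (ξ * Ec + Da * ζ + Sac) * Eb + Da * Dc * η + Sacb
      - (ξ * (Ec * Eb - (Tb + Tc)) + Da * (ζ * Eb + Dc * η + Scb) + Sacb') := by
  have l : (ξ * Eb + Da * η + Sab) * Ec + Da * Db * ζ + Sabc
      - (ξ * (Eb * Ec - (Tc + Tb)) + Da * (η * Ec + Db * ζ + Sbc) + Sabc')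
      = (Sab * Ec + Sabc - Sabc') + (ξ * Tc + ξ * Tb - Da * Sbc) := by noncomm_ring
  have r : (ξ * Ec + Da * ζ + Sac) * Eb + Da * Dc * η + Sacb
      - (ξ * (Ec * Eb - (Tb + Tc)) + Da * (ζ * Eb + Dc * η + Scb) + Sacb')
      = (Sac * Eb + Sacb - Sacb') + (ξ * Tb + ξ * Tc - Da * Scb) := by noncomm_ring
  rw [l, r, key, hsym]; abel

/-- The pre-Lie product on `P × (T(V) ⊗ T(V))` twisted by a cocycle `S`. -/
noncomputable def preMulS {k V P : Type} [Field k]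
    [AddCommGroup V] [Module k V] [AddCommGroup P] [Module k P]
    (mul : P →ₗ[k] P →ₗ[k] P) (p : P →ₗ[k] TensorAlgebra k V)
    (S : P →ₗ[k] P →ₗ[k] TensorAlgebra k V ⊗[k] TensorAlgebra k V) :
    (P × (TensorAlgebra k V ⊗[k] TensorAlgebra k V)) →ₗ[k]
      (P × (TensorAlgebra k V ⊗[k] TensorAlgebra k V)) →ₗ[k]
      (P × (TensorAlgebra k V ⊗[k] TensorAlgebra k V)) :=
  LinearMap.mk₂ k
    (fun x y => (mul x.1 y.1,
      x.2 * (1 ⊗ₜ[k] p y.1 + p y.1 ⊗ₜ[k] 1) + shuffleDiag k V (p x.1) * y.2 + S x.1 y.1))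
    (by
      intro x₁ x₂ y
      refine Prod.ext (by simp) ?_
      simp only [Prod.fst_add, Prod.snd_add, map_add, LinearMap.add_apply, add_mul]
      abel)
    (by
      intro c x y
      refine Prod.ext (by simp) ?_
      simp only [Prod.smul_fst, Prod.smul_snd, map_smul, LinearMap.smul_apply,
        smul_mul_assoc, smul_add])
    (by
      intro x y₁ y₂
      refine Prod.ext (by simp) ?_
      simp only [Prod.fst_add, Prod.snd_add, map_add,
        TensorProduct.tmul_add, TensorProduct.add_tmul, mul_add, LinearMap.add_apply]
      abel)
    (by
      intro c x y
      refine Prod.ext (by simp) ?_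
      simp only [Prod.smul_fst, Prod.smul_snd, map_smul, LinearMap.smul_apply,
        TensorProduct.tmul_smul, ← TensorProduct.smul_tmul', smul_add,
        mul_add, mul_smul_comm])

lemma preMulS_apply {k V P : Type} [Field k]
    [AddCommGroup V] [Module k V] [AddCommGroup P] [Module k P]
    (mul : P →ₗ[k] P →ₗ[k] P) (p : P →ₗ[k] TensorAlgebra k V)
    (S : P →ₗ[k] P →ₗ[k] TensorAlgebra k V ⊗[k] TensorAlgebra k V)
    (x y : P × (TensorAlgebra k V ⊗[k] TensorAlgebra k V)) :
    preMulS mul p S x y = (mul x.1 y.1,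
      x.2 * (1 ⊗ₜ[k] p y.1 + p y.1 ⊗ₜ[k] 1) + shuffleDiag k V (p x.1) * y.2 + S x.1 y.1) :=
  rfl

/-- Given a symmetric linear map `S : pL(V)⊗pL(V) → T̄(V)⊗T̄(V)` such that
`S(a,b)*p(c) + S(a⋆b,c) − S(a,b⋆c)` is symmetric in `b` and `c` (actions
`x*ξ = Δ(x)·ξ`, `ξ*x = ξ·(1⊗x+x⊗1)` pulled back along the canonical pre-Lie
map `p`), there is exactly one linear map `F : pL(V) → T̄(V)⊗T̄(V)` with
`F(v)=0` for `v ∈ V` and `F(a⋆b) = F(a)*p(b) + p(a)*F(b) + S(a,b)`. -/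
theorem unique_F_with_S {k V P : Type} [Field k] [CharZero k]
    [AddCommGroup V] [Module k V] [AddCommGroup P] [Module k P]
    (mul : P →ₗ[k] P →ₗ[k] P) (ι : V →ₗ[k] P)
    (h : IsFreePreLie k V P mul ι)
    (p : P →ₗ[k] TensorAlgebra k V)
    (hpι : ∀ v : V, p (ι v) = TensorAlgebra.ι k v)
    (hpmul : ∀ x y : P, p (mul x y) = p x * p y)
    (S : P →ₗ[k] P →ₗ[k] TensorAlgebra k V ⊗[k] TensorAlgebra k V)
    (hsymm : ∀ a b : P, S a b = S b a)
    (hS : ∀ a b c : P,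
      S a b * (1 ⊗ₜ[k] p c + p c ⊗ₜ[k] 1) + S (mul a b) c - S a (mul b c)
        = S a c * (1 ⊗ₜ[k] p b + p b ⊗ₜ[k] 1) + S (mul a c) b - S a (mul c b)) :
    ∃! F : P →ₗ[k] TensorAlgebra k V ⊗[k] TensorAlgebra k V,
      (∀ v : V, F (ι v) = 0) ∧
      ∀ a b : P,
        F (mul a b)
          = F a * (1 ⊗ₜ[k] p b + p b ⊗ₜ[k] 1)
            + shuffleDiag k V (p a) * F b + S a b := by
  classical
  have hD : ∀ a b : P, shuffleDiag k V (p (mul a b))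
      = shuffleDiag k V (p a) * shuffleDiag k V (p b) := by
    intro a b; rw [hpmul, map_mul]
  have hE : ∀ b c : P,
      (1 ⊗ₜ[k] p (mul b c) + p (mul b c) ⊗ₜ[k] (1 : TensorAlgebra k V))
        = (1 ⊗ₜ[k] p b + p b ⊗ₜ[k] 1) * (1 ⊗ₜ[k] p c + p c ⊗ₜ[k] 1)
          - (p c ⊗ₜ[k] p b + p b ⊗ₜ[k] p c) := by
    intro b c
    rw [hpmul]
    simp only [add_mul, mul_add, Algebra.TensorProduct.tmul_mul_tmul, one_mul, mul_one]
    abel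
  have mpre : ∀ x y z : P × (TensorAlgebra k V ⊗[k] TensorAlgebra k V),
      preMulS mul p S (preMulS mul p S x y) z - preMulS mul p S x (preMulS mul p S y z)
        = preMulS mul p S (preMulS mul p S x z) y
          - preMulS mul p S x (preMulS mul p S z y) := by
    intro x y z
    simp only [preMulS_apply, Prod.mk_sub_mk, Prod.mk.injEq]
    constructor
    · exact h.preLie x.1 y.1 z.1
    · rw [hD x.1 y.1, hD x.1 z.1, hE y.1 z.1, hE z.1 y.1]
      exact preLie_expand_aux _ _ _ _ _ _ _ _ _ _ _ _ _ _ _ _ _ _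
        (hS x.1 y.1 z.1) (hsymm y.1 z.1)
  obtain ⟨g, ⟨hgι, hgmul⟩, hgu⟩ := h.lift _ (preMulS mul p S) mpre (ι.prod 0)
  obtain ⟨g₀, _, hg₀u⟩ := h.lift P mul h.preLie ι
  have e1 : (LinearMap.fst k P (TensorAlgebra k V ⊗[k] TensorAlgebra k V)).comp g = g₀ := by
    refine hg₀u _ ⟨fun v => ?_, fun x y => ?_⟩
    · simp [hgι v]
    · simp [hgmul x y, preMulS_apply]
  have e2 : (LinearMap.id : P →ₗ[k] P) = g₀ := hg₀u _ ⟨fun v => rfl, fun x y => rfl⟩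
  have hfst : ∀ x : P, (g x).1 = x := by
    intro x
    have := congrArg (fun f : P →ₗ[k] P => f x) (e1.trans e2.symm)
    simpa using this
  have hFmul : ∀ a b : P, ((LinearMap.snd k P (TensorAlgebra k V ⊗[k] TensorAlgebra k V)).comp g) (mul a b)
      = ((LinearMap.snd k P (TensorAlgebra k V ⊗[k] TensorAlgebra k V)).comp g) a * (1 ⊗ₜ[k] p b + p b ⊗ₜ[k] 1)
        + shuffleDiag k V (p a) * ((LinearMap.snd k P (TensorAlgebra k V ⊗[k] TensorAlgebra k V)).comp g) b + S a b := by
    intro a b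
    have := congrArg Prod.snd (hgmul a b)
    simp only [preMulS_apply] at this
    simpa [hfst a, hfst b] using this
  have hFι : ∀ v : V, ((LinearMap.snd k P (TensorAlgebra k V ⊗[k] TensorAlgebra k V)).comp g) (ι v) = 0 := by
    intro v; simp [hgι v]
  refine ⟨(LinearMap.snd k P (TensorAlgebra k V ⊗[k] TensorAlgebra k V)).comp g, ⟨hFι, hFmul⟩, ?_⟩
  intro F' hF'
  obtain ⟨hF'1, hF'2⟩ := hF'
  have hFsat : ∀ F : P →ₗ[k] TensorAlgebra k V ⊗[k] TensorAlgebra k V, (∀ v : V, F (ι v) = 0) →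
      (∀ a b : P, F (mul a b) = F a * (1 ⊗ₜ[k] p b + p b ⊗ₜ[k] 1)
        + shuffleDiag k V (p a) * F b + S a b) →
      LinearMap.id.prod F = g := by
    intro F hF1 hF2
    refine hgu _ ⟨fun v => ?_, fun x y => ?_⟩
    · simp [hF1 v]
    · simp [preMulS_apply, hF2 x y]
  have hg1 : LinearMap.id.prod F' = g := hFsat F' hF'1 hF'2
  have hg2 : LinearMap.id.prod ((LinearMap.snd k P (TensorAlgebra k V ⊗[k] TensorAlgebra k V)).comp g) = g := hFsat _ hFι hFmul
  have heq := hg1.trans hg2.symm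
  ext x
  have := congrArg (fun f : P →ₗ[k] P × (TensorAlgebra k V ⊗[k] TensorAlgebra k V) => (f x).2) heq
  simpa using this
end
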